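/- arXiv:2601.01047 — 3 statements merged into one kernel-verified Lean document; each statement's English description precedes it below -/
import Mathlib

section
/- Let (e_n) be a semi-normalized basic sequence in a Banach lattice X with closed linear span E, and let C > 0 be a constant. The following are equivalent: (i) ‖G_{π,m}^∨(x)‖ ≤ C‖x‖ for all x ∈ E, all m ∈ ℕ and all greedy orderings π of x; (ii) ‖𝒢_m^∨(x)‖ ≤ C‖x‖ for all x ∈ E and all m ∈ ℕ; (iii) for every x ∈ E and every m ∈ ℕ there exists a greedy ordering π of x with ‖G_{π,m}^∨(x)‖ ≤ C‖x‖; (iv) ‖𝒢^∨_{|supp(x)|}(x)‖ ≤ C‖x‖ for every finitely supported x ∈ E whose nonzero coefficient moduli |e_n*(x)|, n ∈ supp(x), are pairwise distinct; (v) ‖𝒢^∨_{|supp(x)|}(x)‖ ≤ C‖x‖ for every finitely supported x ∈ E. -/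
open Filter Topology

open Filter Topology MeasureTheory

section Core

variable {X : Type*} [NormedAddCommGroup X] [Lattice X] [HasSolidNorm X] [IsOrderedAddMonoid X] [NormedSpace ℝ X]

/-- The closed linear span of a sequence. -/
noncomputable def closedSpan (e : ℕ → X) : Submodule ℝ X :=
  (Submodule.span ℝ (Set.range e)).topologicalClosure

/-- `e` is a basic sequence (a Schauder basis of its closed linear span), with coefficient
functionals `x ↦ c x ·` (the biorthogonal functionals applied to `x`). -/
def IsBasicSeq (e : ℕ → X) (c : X → ℕ → ℝ) : Prop :=
  (∀ n, e n ≠ 0) ∧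
  ∀ x ∈ closedSpan e,
    Tendsto (fun m => ∑ k ∈ Finset.range m, c x k • e k) atTop (𝓝 x) ∧
    ∀ a : ℕ → ℝ, Tendsto (fun m => ∑ k ∈ Finset.range m, a k • e k) atTop (𝓝 x) → a = c x

def SemiNormalized (e : ℕ → X) : Prop :=
  ∃ b B : ℝ, 0 < b ∧ ∀ n, b ≤ ‖e n‖ ∧ ‖e n‖ ≤ B

/-- `π` is a greedy ordering of `x` (with respect to coefficients `c`). -/
def IsGreedyOrdering (c : X → ℕ → ℝ) (x : X) (π : ℕ → ℕ) : Prop :=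
  Function.Injective π ∧ (∀ n, c x n ≠ 0 → n ∈ Set.range π) ∧
    ∀ j k, j ≤ k → |c x (π k)| ≤ |c x (π j)|

/-- The natural greedy ordering: ties among coefficient moduli are broken by index. -/
def IsNaturalGreedyOrdering (c : X → ℕ → ℝ) (x : X) (ρ : ℕ → ℕ) : Prop :=
  IsGreedyOrdering c x ρ ∧ ∀ j k, j < k → |c x (ρ j)| = |c x (ρ k)| → ρ j < ρ k

/-- `G_{π,m}(x)`, the `m`-th greedy sum of `x` along the ordering `π`. -/
noncomputable def greedySum (e : ℕ → X) (c : X → ℕ → ℝ) (π : ℕ → ℕ) (x : X) (m : ℕ) : X :=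
  ∑ n ∈ Finset.range m, c x (π n) • e (π n)

/-- `⋁_{n=1}^{m+1} |G_{π,n}(x)|`. -/
noncomputable def greedyMax (e : ℕ → X) (c : X → ℕ → ℝ) (π : ℕ → ℕ) (x : X) (m : ℕ) : X :=
  partialSups (fun n => |greedySum e c π x (n + 1)|) m

/-- Relatively uniform convergence. -/
def UConv (y : ℕ → X) (x : X) : Prop :=
  ∃ u : X, 0 ≤ u ∧ ∀ ε : ℝ, 0 < ε → ∃ N, ∀ n ≥ N, |y n - x| ≤ ε • u

/-- Order convergence (with respect to a net, encoded by a downward directed set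
with infimum `0`). -/
def OConv (y : ℕ → X) (x : X) : Prop :=
  ∃ D : Set X, D.Nonempty ∧ DirectedOn (· ≥ ·) D ∧ IsGLB D 0 ∧
    ∀ d ∈ D, ∃ N, ∀ n ≥ N, |y n - x| ≤ d

end Core

/-- `supp(x)` with respect to the coefficient functionals `c`. -/
def coeffSupport {X : Type*} [NormedAddCommGroup X] [Lattice X] [HasSolidNorm X] [IsOrderedAddMonoid X] [NormedSpace ℝ X]
    (c : X → ℕ → ℝ) (x : X) : Set ℕ := {n | c x n ≠ 0}

section Aux

set_option linter.unusedSectionVars false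

variable {X : Type*} [NormedAddCommGroup X] [Lattice X] [HasSolidNorm X] [IsOrderedAddMonoid X] [NormedSpace ℝ X]
variable {e : ℕ → X} {c : X → ℕ → ℝ}

lemma mem_closedSpan_single (n : ℕ) : e n ∈ closedSpan e :=
  Submodule.le_topologicalClosure _ (Submodule.subset_span ⟨n, rfl⟩)

lemma coeff_perturb (hbasic : IsBasicSeq e c) {x : X} (hx : x ∈ closedSpan e)
    (σ : ℕ → ℕ) (K : ℕ) (t : ℕ → ℝ) :
    (x + ∑ n ∈ Finset.range K, t n • e (σ n)) ∈ closedSpan e ∧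
    ∀ j, c (x + ∑ n ∈ Finset.range K, t n • e (σ n)) j
        = c x j + ∑ n ∈ Finset.range K, if σ n = j then t n else 0 := by
  set y := x + ∑ n ∈ Finset.range K, t n • e (σ n) with hy
  have hmem : y ∈ closedSpan e :=
    Submodule.add_mem _ hx (Submodule.sum_mem _ fun n _ =>
      Submodule.smul_mem _ _ (mem_closedSpan_single _))
  refine ⟨hmem, ?_⟩
  set a : ℕ → ℝ := fun j => c x j + ∑ n ∈ Finset.range K, if σ n = j then t n else 0 with ha
  have htend : Tendsto (fun M => ∑ k ∈ Finset.range M, a k • e k) atTop (𝓝 y) := by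
    have h1 : Tendsto (fun M => ∑ k ∈ Finset.range M, c x k • e k) atTop (𝓝 x) :=
      (hbasic.2 x hx).1
    have h2 : ∀ᶠ M in atTop,
        (∑ k ∈ Finset.range M, (∑ n ∈ Finset.range K, if σ n = k then t n else 0) • e k)
          = ∑ n ∈ Finset.range K, t n • e (σ n) := by
      filter_upwards [eventually_ge_atTop ((Finset.range K).sup σ + 1)] with M hM
      have hσM : ∀ n ∈ Finset.range K, σ n ∈ Finset.range M := by
        intro n hn
        have := Finset.le_sup (f := σ) hn
        exact Finset.mem_range.mpr (lt_of_lt_of_le (Nat.lt_succ_of_le this) hM)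
      calc ∑ k ∈ Finset.range M, (∑ n ∈ Finset.range K, if σ n = k then t n else 0) • e k
          = ∑ k ∈ Finset.range M, ∑ n ∈ Finset.range K, (if σ n = k then t n • e k else 0) := by
            refine Finset.sum_congr rfl fun k _ => ?_
            rw [Finset.sum_smul]
            exact Finset.sum_congr rfl fun n _ => by split <;> simp
        _ = ∑ n ∈ Finset.range K, ∑ k ∈ Finset.range M, (if σ n = k then t n • e k else 0) :=
            Finset.sum_comm
        _ = ∑ n ∈ Finset.range K, t n • e (σ n) := by
            refine Finset.sum_congr rfl fun n hn => ?_
            rw [Finset.sum_ite_eq (Finset.range M) (σ n) (fun k => t n • e k), if_pos (hσM n hn)]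
    have h2' : Tendsto (fun M => ∑ k ∈ Finset.range M,
        (∑ n ∈ Finset.range K, if σ n = k then t n else 0) • e k) atTop
        (𝓝 (∑ n ∈ Finset.range K, t n • e (σ n))) :=
      Tendsto.congr' (by filter_upwards [h2] with M hM using hM.symm) tendsto_const_nhds
    have := h1.add h2'
    refine this.congr fun M => ?_
    simp only [ha, add_smul, Finset.sum_add_distrib]
  have := (hbasic.2 y hmem).2 a htend
  intro j; exact (congrFun this j).symm

lemma coeff_zero (hbasic : IsBasicSeq e c) : ∀ j, c (0:X) j = 0 := by
  have h0 : (0:X) ∈ closedSpan e := Submodule.zero_mem _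
  have := (hbasic.2 0 h0).2 (fun _ => 0)
    (by simp [(tendsto_const_nhds : Tendsto (fun _ : ℕ => (0:X)) atTop (𝓝 0))])
  intro j; exact (congrFun this j).symm

lemma partialSups_congr' {f g : ℕ → X} (m : ℕ) (h : ∀ k ≤ m, f k = g k) :
    partialSups f m = partialSups g m := by
  induction m with
  | zero => simpa using h 0 le_rfl
  | succ n ih =>
    rw [show n + 1 = Order.succ n from rfl, partialSups_succ, partialSups_succ,
      ih (fun k hk => h k (hk.trans (Nat.le_succ n))), h (Order.succ n) le_rfl]

lemma Filter.Tendsto.abs'' {ι : Type*} {l : Filter ι} {f : ι → X} {a : X}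
    (h : Tendsto f l (𝓝 a)) : Tendsto (fun i => |f i|) l (𝓝 |a|) := by
  simpa [abs] using h.sup_nhds h.neg

lemma tendsto_pSups {f : ℕ → ℕ → X} {g : ℕ → X} (m : ℕ)
    (h : ∀ k ≤ m, Tendsto (fun i => f i k) atTop (𝓝 (g k))) :
    Tendsto (fun i => (partialSups (fun n => |∑ k ∈ Finset.range (n+1), f i k|) m : X)) atTop
      (𝓝 (partialSups (fun n => |∑ k ∈ Finset.range (n+1), g k|) m)) := by
  induction m with
  | zero =>
    simp only [partialSups_zero]
    exact (tendsto_finset_sum _ fun k hk =>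
      h k (by simpa using Nat.lt_succ_iff.mp (Finset.mem_range.mp hk))).abs''
  | succ n ih =>
    rw [show n + 1 = Order.succ n from rfl]
    simp only [partialSups_succ]
    refine Tendsto.sup_nhds (ih fun k hk => h k (hk.trans (Nat.le_succ n))) ?_
    exact (tendsto_finset_sum _ fun k hk =>
      h k (Nat.lt_succ_iff.mp (Finset.mem_range.mp hk))).abs''

lemma exists_sorted_list (w : ℕ → ℝ) (F : Finset ℕ) :
    ∃ l : List ℕ, l.Nodup ∧ l.toFinset = F ∧ l.Pairwise (fun a b => w b ≤ w a) := by
  induction F using Finset.strongInduction with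
  | _ F IH =>
    rcases F.eq_empty_or_nonempty with rfl | hne
    · exact ⟨[], by simp, by simp, by simp⟩
    · obtain ⟨a, haF, hamax⟩ := F.exists_max_image w hne
      obtain ⟨l, hn, ht, hp⟩ := IH (F.erase a) (Finset.erase_ssubset haF)
      refine ⟨a :: l, ?_, ?_, ?_⟩
      · refine List.nodup_cons.mpr ⟨fun hmem => ?_, hn⟩
        have : a ∈ F.erase a := ht ▸ List.mem_toFinset.mpr hmem
        exact absurd this (Finset.notMem_erase a F)
      · rw [List.toFinset_cons, ht, Finset.insert_erase haF]
      · refine List.Pairwise.cons (fun b hb => ?_) hp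
        have : b ∈ F.erase a := ht ▸ List.mem_toFinset.mpr hb
        exact hamax b (Finset.mem_of_mem_erase this)

lemma greedy_rigid {y : X} {σ : ℕ → ℕ} {K : ℕ} (hinj : Set.InjOn σ (Set.Iio K))
    (hne : ∀ n < K, c y (σ n) ≠ 0)
    (hstrict : ∀ j k, j < k → k < K → |c y (σ k)| < |c y (σ j)|)
    (hdom : ∀ j, (∀ n, n < K → σ n ≠ j) → |c y j| < |c y (σ (K-1))|)
    {π : ℕ → ℕ} (hπ : IsGreedyOrdering c y π) :
    ∀ n, n < K → π n = σ n := by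
  intro n
  induction n using Nat.strong_induction_on with
  | _ n IH =>
    intro hn
    obtain ⟨k, hk⟩ := hπ.2.1 (σ n) (hne n hn)
    have hkn : n ≤ k := by
      by_contra h
      push_neg at h
      have h1 : π k = σ k := IH k h (lt_trans h hn)
      have h2 : σ k = σ n := by rw [← h1, hk]
      exact absurd (hinj (lt_trans h hn) hn h2) (Nat.ne_of_lt h)
    have hge : |c y (σ n)| ≤ |c y (π n)| := by
      have := hπ.2.2 n k hkn; rwa [hk] at this
    by_cases hcase : ∃ l, l < K ∧ σ l = π n
    · obtain ⟨l, hlK, hl⟩ := hcase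
      rcases lt_trichotomy l n with h | h | h
      · exfalso
        have h1 : π l = σ l := IH l h (lt_trans h hn)
        have h2 : π l = π n := by rw [h1, hl]
        exact absurd (hπ.1 h2) (Nat.ne_of_lt h)
      · rw [← hl, h]
      · exfalso
        have := hstrict n l h hlK
        rw [hl] at this
        exact absurd hge (not_le.mpr this)
    · exfalso
      push_neg at hcase
      have h1 := hdom (π n) hcase
      have h2 : |c y (σ (K-1))| ≤ |c y (σ n)| := by
        rcases lt_or_eq_of_le (Nat.le_sub_one_of_lt hn) with h | h
        · exact le_of_lt (hstrict n (K-1) h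
            (Nat.sub_lt (Nat.lt_of_le_of_lt (Nat.zero_le n) hn) one_pos))
        · rw [h]
      exact absurd hge (not_le.mpr (lt_of_lt_of_le h1 h2))

lemma greedyMax_eq (x : X) (π : ℕ → ℕ) (w : ℕ → X) (m : ℕ)
    (h : ∀ k ≤ m, c x (π k) • e (π k) = w k) :
    greedyMax e c π x m = partialSups (fun n => |∑ k ∈ Finset.range (n+1), w k|) m := by
  unfold greedyMax
  refine partialSups_congr' m fun k hk => ?_
  congr 1
  unfold greedySum
  exact Finset.sum_congr rfl fun j hj =>
    h j (le_trans (Nat.lt_succ_iff.mp (Finset.mem_range.mp hj)) hk)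

lemma pert_main (hbasic : IsBasicSeq e c) {x : X} (hx : x ∈ closedSpan e)
    {σ : ℕ → ℕ} {K : ℕ} (hK : 0 < K) (hinj : Set.InjOn σ (Set.Iio K))
    (H1 : ∀ j k, j ≤ k → k < K → |c x (σ k)| ≤ |c x (σ j)|)
    (H2 : ∀ j, (∀ n, n < K → σ n ≠ j) → |c x j| ≤ |c x (σ (K-1))|)
    {δ : ℝ} (hδ : 0 < δ) :
    ∃ y : X,
      y = x + ∑ n ∈ Finset.range K,
        ((if 0 ≤ c x (σ n) then (1:ℝ) else -1) * (δ * ((K:ℝ) - n))) • e (σ n) ∧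
      y ∈ closedSpan e ∧
      (∀ n, n < K → c y (σ n)
          = c x (σ n) + (if 0 ≤ c x (σ n) then (1:ℝ) else -1) * (δ * ((K:ℝ) - n))) ∧
      (∀ j, (∀ n, n < K → σ n ≠ j) → c y j = c x j) ∧
      (∀ n, n < K → c y (σ n) ≠ 0) ∧
      (∀ j k, j < k → k < K → |c y (σ k)| < |c y (σ j)|) ∧
      (∀ π, IsGreedyOrdering c y π → ∀ n, n < K → π n = σ n) := by
  set t : ℕ → ℝ := fun n => (if 0 ≤ c x (σ n) then (1:ℝ) else -1) * (δ * ((K:ℝ) - n)) with ht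
  obtain ⟨hmem, hcoeff⟩ := coeff_perturb hbasic hx σ K t
  set y := x + ∑ n ∈ Finset.range K, t n • e (σ n) with hy
  have hb : ∀ n, n < K → c y (σ n) = c x (σ n) + t n := by
    intro n hn
    rw [hcoeff (σ n)]
    congr 1
    rw [Finset.sum_eq_single_of_mem n (Finset.mem_range.mpr hn)]
    · exact if_pos rfl
    · intro b hb hbn
      exact if_neg fun h => hbn (hinj (Finset.mem_range.mp hb) hn h)
  have hc : ∀ j, (∀ n, n < K → σ n ≠ j) → c y j = c x j := by
    intro j hj
    rw [hcoeff j, Finset.sum_eq_zero, add_zero]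
    intro n hn
    exact if_neg (hj n (Finset.mem_range.mp hn))
  have habs : ∀ n, n < K → |c y (σ n)| = |c x (σ n)| + δ * ((K:ℝ) - n) := by
    intro n hn
    have hp : 0 < δ * ((K:ℝ) - n) := by
      have : (n:ℝ) < K := by exact_mod_cast hn
      have := sub_pos.mpr this
      positivity
    rw [hb n hn]
    by_cases h : 0 ≤ c x (σ n)
    · simp only [ht, if_pos h, one_mul]
      rw [abs_of_nonneg (by linarith), abs_of_nonneg h]
    · push_neg at h
      simp only [ht, if_neg (not_le.mpr h), neg_one_mul]
      rw [abs_of_neg (by linarith), abs_of_neg h]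
      ring
  have hne : ∀ n, n < K → c y (σ n) ≠ 0 := by
    intro n hn h0
    have hp : 0 < δ * ((K:ℝ) - n) := by
      have : (n:ℝ) < K := by exact_mod_cast hn
      have := sub_pos.mpr this
      positivity
    have := habs n hn
    rw [h0, abs_zero] at this
    have := abs_nonneg (c x (σ n))
    linarith
  have hstrict : ∀ j k, j < k → k < K → |c y (σ k)| < |c y (σ j)| := by
    intro j k hjk hkK
    rw [habs j (lt_trans hjk hkK), habs k hkK]
    have h1 := H1 j k (le_of_lt hjk) hkK
    have h2 : ((K:ℝ) - k) < ((K:ℝ) - j) := by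
      have : (j:ℝ) < k := by exact_mod_cast hjk
      linarith
    nlinarith
  have hdom : ∀ j, (∀ n, n < K → σ n ≠ j) → |c y j| < |c y (σ (K-1))| := by
    intro j hj
    rw [hc j hj, habs (K-1) (Nat.sub_lt hK one_pos)]
    have h1 := H2 j hj
    have h2 : (0:ℝ) < δ * ((K:ℝ) - ↑(K-1)) := by
      have : ((K-1 : ℕ):ℝ) < K := by exact_mod_cast Nat.sub_lt hK one_pos
      have := sub_pos.mpr this
      positivity
    linarith
  exact ⟨y, rfl, hmem, hb, hc, hne, hstrict,
    fun π hπ => greedy_rigid hinj hne hstrict hdom hπ⟩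


lemma hard31 (hbasic : IsBasicSeq e c) (C : ℝ)
    (h3 : ∀ x ∈ closedSpan e, ∀ m, ∃ π : ℕ → ℕ, IsGreedyOrdering c x π ∧
      ‖greedyMax e c π x m‖ ≤ C * ‖x‖) :
    ∀ x ∈ closedSpan e, ∀ π : ℕ → ℕ, IsGreedyOrdering c x π →
      ∀ m, ‖greedyMax e c π x m‖ ≤ C * ‖x‖ := by
  intro x hx π hπ m
  set K := m + 1 with hKdef
  have hKpos : 0 < K := Nat.succ_pos m
  have hinj : Set.InjOn π (Set.Iio K) := fun a _ b _ h => hπ.1 h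
  have H1 : ∀ j k, j ≤ k → k < K → |c x (π k)| ≤ |c x (π j)| := fun j k hjk _ => hπ.2.2 j k hjk
  have H2 : ∀ j, (∀ n, n < K → π n ≠ j) → |c x j| ≤ |c x (π (K-1))| := by
    intro j hj
    by_cases h : c x j = 0
    · rw [h, abs_zero]; exact abs_nonneg _
    · obtain ⟨k, hk⟩ := hπ.2.1 j h
      have hkK : K ≤ k := by
        by_contra hlt; push_neg at hlt; exact hj k hlt hk
      have := hπ.2.2 (K-1) k (le_trans (Nat.sub_le K 1) hkK)
      rwa [hk] at this
  set δ : ℕ → ℝ := fun i => 1/((i:ℝ)+1) with hδdef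
  have hδpos : ∀ i, 0 < δ i := fun i => by positivity
  have hδ0 : Tendsto δ atTop (𝓝 0) := tendsto_one_div_add_atTop_nhds_zero_nat
  set s : ℕ → ℝ := fun n => if 0 ≤ c x (π n) then (1:ℝ) else -1 with hs
  set v : ℕ → X := fun i =>
    ∑ n ∈ Finset.range K, (s n * (δ i * ((K:ℝ) - n))) • e (π n)
    with hv
  set G : ℕ → X := fun i => partialSups
      (fun n => |∑ k ∈ Finset.range (n+1),
        (c x (π k) + s k * (δ i * ((K:ℝ)-k))) • e (π k)|) m
    with hG
  have key : ∀ i, ‖G i‖ ≤ C * ‖x + v i‖ := by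
    intro i
    obtain ⟨y, hyeq, hymem, hyb, hyc, hyne, hystrict, hyrig⟩ :=
      pert_main hbasic hx hKpos hinj H1 H2 (hδpos i)
    obtain ⟨π'', hπ'', hbound⟩ := h3 y hymem m
    have hrig := hyrig π'' hπ''
    have heq : greedyMax e c π'' y m = G i := by
      simp only [hG, hs]
      refine greedyMax_eq y π'' _ m fun k hk => ?_
      have hkK : k < K := Nat.lt_succ_of_le hk
      rw [hrig k hkK, hyb k hkK]
    rw [heq, hyeq] at hbound
    simp only [hG, hv, hs]
    simpa only [hG, hs] using hbound
  have hGlim : Tendsto G atTop (𝓝 (greedyMax e c π x m)) := by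
    rw [greedyMax_eq x π (fun k => c x (π k) • e (π k)) m (fun k _ => rfl), hG]
    refine tendsto_pSups (f := fun i k =>
      (c x (π k) + s k * (δ i * ((K:ℝ)-k))) • e (π k))
      (g := fun k => c x (π k) • e (π k)) m fun k hk => ?_
    have h2 : Tendsto (fun i => s k * (δ i * ((K:ℝ)-k)))
        atTop (𝓝 0) := by
      have := (hδ0.mul_const ((K:ℝ)-k)).const_mul (s k)
      simpa only [zero_mul, mul_zero] using this
    have h1 : Tendsto (fun i => c x (π k)
        + s k * (δ i * ((K:ℝ)-k))) atTop (𝓝 (c x (π k))) := by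
      simpa only [add_zero] using (tendsto_const_nhds (x := c x (π k)) (f := atTop)).add h2
    exact h1.smul_const (e (π k))
  have hvlim : Tendsto v atTop (𝓝 0) := by
    have hterm : ∀ n ∈ Finset.range K,
        Tendsto (fun i => (s n * (δ i * ((K:ℝ) - n))) • e (π n))
          atTop (𝓝 0) := by
      intro n _
      have h2 : Tendsto (fun i => s n * (δ i * ((K:ℝ)-n)))
          atTop (𝓝 0) := by
        have := (hδ0.mul_const ((K:ℝ)-n)).const_mul (s n)
        simpa only [zero_mul, mul_zero] using this
      simpa only [zero_smul] using h2.smul_const (e (π n))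
    rw [hv]
    have := tendsto_finset_sum (Finset.range K) hterm
    simpa only [Finset.sum_const_zero] using this
  have hnorm : Tendsto (fun i => C * ‖x + v i‖) atTop (𝓝 (C * ‖x‖)) := by
    have := (tendsto_const_nhds (x := x) (f := atTop)).add hvlim
    simpa only [add_zero] using this.norm.const_mul C
  exact le_of_tendsto_of_tendsto' hGlim.norm hnorm key

lemma hard41 (hbasic : IsBasicSeq e c) (ρ : X → ℕ → ℕ)
    (hρ : ∀ x ∈ closedSpan e, IsNaturalGreedyOrdering c x (ρ x)) (C : ℝ)
    (h4 : ∀ x ∈ closedSpan e, ∀ hfin : (coeffSupport c x).Finite,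
      (∀ i ∈ coeffSupport c x, ∀ j ∈ coeffSupport c x, i ≠ j → |c x i| ≠ |c x j|) →
      ‖greedyMax e c (ρ x) x (hfin.toFinset.card - 1)‖ ≤ C * ‖x‖) :
    ∀ x ∈ closedSpan e, ∀ π : ℕ → ℕ, IsGreedyOrdering c x π →
      ∀ m, ‖greedyMax e c π x m‖ ≤ C * ‖x‖ := by
  classical
  intro x hx π hπ m
  set N₀ := (Finset.range (m+1)).sup π + 1 with hN₀
  have step1 : ∀ N, N₀ ≤ N →
      ‖greedyMax e c π x m‖ ≤ C * ‖∑ k ∈ Finset.range N, c x k • e k‖ := by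
    intro N hN
    have hπlt : ∀ k, k ≤ m → π k < N := by
      intro k hk
      have h1 : π k ≤ (Finset.range (m+1)).sup π :=
        Finset.le_sup (Finset.mem_range.mpr (Nat.lt_succ_of_le hk))
      omega
    -- the truncated vector y
    obtain ⟨hymem', hcy'⟩ := coeff_perturb hbasic (Submodule.zero_mem (closedSpan e)) id N (c x)
    set y : X := ∑ k ∈ Finset.range N, c x k • e k with hydef
    have hy0 : (0:X) + ∑ n ∈ Finset.range N, c x n • e (id n) = y := by
      simp [hydef]
    rw [hy0] at hymem' hcy'
    have hcy : ∀ j, c y j = if j < N then c x j else 0 := by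
      intro j
      rw [hcy' j, coeff_zero hbasic, zero_add]
      simp only [id]
      rw [Finset.sum_ite_eq' (Finset.range N) j (fun n => c x n)]
      simp [Finset.mem_range]
    have hcyπ : ∀ k, k ≤ m → c y (π k) = c x (π k) := by
      intro k hk; rw [hcy]; exact if_pos (hπlt k hk)
    -- the support structure
    set F : Finset ℕ := (Finset.range N).filter (fun j => c x j ≠ 0) with hF
    set P : Finset ℕ := (Finset.range (m+1)).image π with hP
    obtain ⟨l, hlnd, hlt, hlp⟩ := exists_sorted_list (fun j => |c x j|) (F \ P)
    set K := m + 1 + l.length with hKdef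
    have hKpos : 0 < K := by omega
    set σ : ℕ → ℕ := fun n => if n ≤ m then π n else l.getD (n - (m+1)) 0 with hσ
    have hσpre : ∀ k, k ≤ m → σ k = π k := fun k hk => if_pos hk
    have hget : ∀ n, m < n → n < K → ∃ hidx : n - (m+1) < l.length,
        σ n = l.get ⟨n - (m+1), hidx⟩ := by
      intro n h1 h2
      have hidx : n - (m+1) < l.length := by omega
      refine ⟨hidx, ?_⟩
      have hσn : σ n = l.getD (n - (m+1)) 0 := if_neg (by omega : ¬ n ≤ m)
      rw [hσn]
      exact List.getD_eq_getElem l 0 hidx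
    have hTmem : ∀ q ∈ F \ P, (q < N ∧ c x q ≠ 0 ∧ ∃ r, m < r ∧ π r = q) := by
      intro q hq
      rw [Finset.mem_sdiff, hF, Finset.mem_filter, Finset.mem_range] at hq
      obtain ⟨⟨hqN, hqne⟩, hqP⟩ := hq
      obtain ⟨r, hr⟩ := hπ.2.1 q hqne
      refine ⟨hqN, hqne, r, ?_, hr⟩
      by_contra hrm
      push_neg at hrm
      exact hqP (Finset.mem_image.mpr ⟨r, Finset.mem_range.mpr (Nat.lt_succ_of_le hrm), hr⟩)
    have htail : ∀ n, m < n → n < K → σ n ∈ F \ P := by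
      intro n h1 h2
      obtain ⟨hidx, hσn⟩ := hget n h1 h2
      rw [hσn, ← hlt]
      exact List.mem_toFinset.mpr (List.get_mem l _)
    have hcyT : ∀ q ∈ F \ P, c y q = c x q := by
      intro q hq
      rw [hcy]
      exact if_pos (hTmem q hq).1
    have hσinj : Set.InjOn σ (Set.Iio K) := by
      intro a ha b hb hab
      simp only [Set.mem_Iio] at ha hb
      by_cases ham : a ≤ m <;> by_cases hbm : b ≤ m
      · rw [hσpre a ham, hσpre b hbm] at hab
        exact hπ.1 hab
      · exfalso
        push_neg at hbm
        have h1 : σ a ∈ P := by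
          rw [hσpre a ham]
          exact Finset.mem_image.mpr ⟨a, Finset.mem_range.mpr (Nat.lt_succ_of_le ham), rfl⟩
        have h2 := htail b hbm hb
        rw [← hab] at h2
        exact (Finset.mem_sdiff.mp h2).2 h1
      · exfalso
        push_neg at ham
        have h1 : σ b ∈ P := by
          rw [hσpre b hbm]
          exact Finset.mem_image.mpr ⟨b, Finset.mem_range.mpr (Nat.lt_succ_of_le hbm), rfl⟩
        have h2 := htail a ham ha
        rw [hab] at h2
        exact (Finset.mem_sdiff.mp h2).2 h1
      · push_neg at ham hbm
        obtain ⟨hia, hea⟩ := hget a ham ha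
        obtain ⟨hib, heb⟩ := hget b hbm hb
        rw [hea, heb] at hab
        have := List.nodup_iff_injective_get.mp hlnd hab
        have : a - (m+1) = b - (m+1) := congrArg Fin.val this
        omega
    have H1 : ∀ j k, j ≤ k → k < K → |c y (σ k)| ≤ |c y (σ j)| := by
      intro j k hjk hkK
      by_cases hkm : k ≤ m
      · have hjm : j ≤ m := le_trans hjk hkm
        rw [hσpre k hkm, hσpre j hjm, hcyπ k hkm, hcyπ j hjm]
        exact hπ.2.2 j k hjk
      · push_neg at hkm
        have hqT := htail k hkm hkK
        obtain ⟨hqN, hqne, r, hrm, hr⟩ := hTmem _ hqT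
        by_cases hjm : j ≤ m
        · rw [hσpre j hjm, hcyπ j hjm, hcyT _ hqT, ← hr]
          exact hπ.2.2 j r (le_trans hjm (le_of_lt hrm))
        · push_neg at hjm
          rcases eq_or_lt_of_le hjk with rfl | hjk'
          · exact le_rfl
          · have hpT := htail j hjm (lt_trans hjk' hkK)
            obtain ⟨hij, hej⟩ := hget j hjm (lt_trans hjk' hkK)
            obtain ⟨hik, hek⟩ := hget k hkm hkK
            rw [hcyT _ hqT, hcyT _ hpT, hej, hek]
            exact List.pairwise_iff_get.mp hlp ⟨j - (m+1), hij⟩ ⟨k - (m+1), hik⟩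
              (by simp only [Fin.mk_lt_mk]; omega)
    have hout : ∀ j, (∀ n, n < K → σ n ≠ j) → c y j = 0 := by
      intro j hj
      by_contra hne
      have hjN : j < N := by
        by_contra h
        rw [hcy j, if_neg h] at hne
        exact hne rfl
      have hjx : c x j ≠ 0 := by
        rw [hcy j, if_pos hjN] at hne
        exact hne
      have hjF : j ∈ F := Finset.mem_filter.mpr ⟨Finset.mem_range.mpr hjN, hjx⟩
      by_cases hjP : j ∈ P
      · obtain ⟨r, hrmem, hr⟩ := Finset.mem_image.mp hjP
        have hrm : r ≤ m := Nat.lt_succ_iff.mp (Finset.mem_range.mp hrmem)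
        exact hj r (by omega) (by rw [hσpre r hrm]; exact hr)
      · have hjT : j ∈ l.toFinset := by rw [hlt]; exact Finset.mem_sdiff.mpr ⟨hjF, hjP⟩
        obtain ⟨i, hi⟩ := List.mem_iff_get.mp (List.mem_toFinset.mp hjT)
        have hn : m + 1 + (i:ℕ) < K := by
          have := i.isLt; omega
        refine hj (m + 1 + (i:ℕ)) hn ?_
        obtain ⟨hidx, hσn⟩ := hget (m + 1 + (i:ℕ)) (by omega) hn
        rw [hσn, ← hi]
        congr 1
        ext
        simp
    have H2 : ∀ j, (∀ n, n < K → σ n ≠ j) → |c y j| ≤ |c y (σ (K-1))| := by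
      intro j hj
      rw [hout j hj, abs_zero]
      exact abs_nonneg _
    -- perturbation and limit
    set δ : ℕ → ℝ := fun i => 1/((i:ℝ)+1) with hδdef
    have hδpos : ∀ i, 0 < δ i := fun i => by positivity
    have hδ0 : Tendsto δ atTop (𝓝 0) := tendsto_one_div_add_atTop_nhds_zero_nat
    set s : ℕ → ℝ := fun n => if 0 ≤ c y (σ n) then (1:ℝ) else -1 with hs
    set v : ℕ → X := fun i =>
      ∑ n ∈ Finset.range K, (s n * (δ i * ((K:ℝ) - n))) • e (σ n) with hv
    set G : ℕ → X := fun i => partialSups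
        (fun n => |∑ k ∈ Finset.range (n+1),
          (c x (π k) + s k * (δ i * ((K:ℝ)-k))) • e (π k)|) m with hG
    have key : ∀ i, ‖G i‖ ≤ C * ‖y + v i‖ := by
      intro i
      obtain ⟨z, hzeq, hzmem, hzb, hzc, hzne, hzstrict, hzrig⟩ :=
        pert_main hbasic hymem' hKpos hσinj H1 H2 (hδpos i)
      have hsupp : coeffSupport c z = σ '' Set.Iio K := by
        ext j
        simp only [coeffSupport, Set.mem_setOf_eq, Set.mem_image, Set.mem_Iio]
        constructor
        · intro hne
          by_contra him
          push_neg at him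
          have : ∀ n, n < K → σ n ≠ j := fun n hn => him n hn
          rw [hzc j this, hout j this] at hne
          exact hne rfl
        · rintro ⟨n, hn, rfl⟩
          exact hzne n hn
      have hfin : (coeffSupport c z).Finite := by
        rw [hsupp]; exact (Set.finite_Iio K).image σ
      have htoF : hfin.toFinset = Finset.image σ (Finset.range K) := by
        ext j
        simp only [Set.Finite.mem_toFinset, hsupp, Set.mem_image, Set.mem_Iio,
          Finset.mem_image, Finset.mem_range]
      have hcard : hfin.toFinset.card = K := by
        rw [htoF, Finset.card_image_of_injOn (by rw [Finset.coe_range]; exact hσinj),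
          Finset.card_range]
      have hdistinct : ∀ i' ∈ coeffSupport c z, ∀ j ∈ coeffSupport c z,
          i' ≠ j → |c z i'| ≠ |c z j| := by
        intro i' hi' j hj hij
        rw [hsupp] at hi' hj
        obtain ⟨a, ha, rfl⟩ := hi'
        obtain ⟨b, hb, rfl⟩ := hj
        rw [Set.mem_Iio] at ha hb
        rcases lt_trichotomy a b with h | h | h
        · exact fun heq => absurd heq.symm (ne_of_lt (hzstrict a b h hb))
        · exact absurd (congrArg σ h) hij
        · exact fun heq => absurd heq (ne_of_lt (hzstrict b a h ha))
      have hb4 := h4 z hzmem hfin hdistinct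
      rw [hcard] at hb4
      have hρz := (hρ z hzmem).1
      have hrig := hzrig (ρ z) hρz
      have hmK : m ≤ K - 1 := by omega
      have h0le : (0:X) ≤ greedyMax e c (ρ z) z m := by
        unfold greedyMax
        exact le_trans (abs_nonneg (greedySum e c (ρ z) z (0+1)))
          (le_partialSups_of_le (fun n => |greedySum e c (ρ z) z (n+1)|) (Nat.zero_le m))
      have hmono : greedyMax e c (ρ z) z m ≤ greedyMax e c (ρ z) z (K-1) := by
        unfold greedyMax
        exact (partialSups _).monotone hmK
      have hnle : ‖greedyMax e c (ρ z) z m‖ ≤ ‖greedyMax e c (ρ z) z (K-1)‖ :=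
        norm_le_norm_of_abs_le_abs
          (by rw [abs_of_nonneg h0le, abs_of_nonneg (le_trans h0le hmono)]; exact hmono)
      have hGeq : greedyMax e c (ρ z) z m = G i := by
        refine greedyMax_eq z (ρ z) _ m fun k hk => ?_
        have hkK : k < K := by omega
        rw [hrig k hkK, hzb k hkK]
        simp only [hs]
        rw [hσpre k hk, hcyπ k hk]
      calc ‖G i‖ = ‖greedyMax e c (ρ z) z m‖ := by rw [hGeq]
        _ ≤ ‖greedyMax e c (ρ z) z (K-1)‖ := hnle
        _ ≤ C * ‖z‖ := hb4
        _ = C * ‖y + v i‖ := by rw [hzeq]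
    have hGlim : Tendsto G atTop (𝓝 (greedyMax e c π x m)) := by
      rw [greedyMax_eq x π (fun k => c x (π k) • e (π k)) m (fun k _ => rfl), hG]
      refine tendsto_pSups (f := fun i k =>
        (c x (π k) + s k * (δ i * ((K:ℝ)-k))) • e (π k))
        (g := fun k => c x (π k) • e (π k)) m fun k hk => ?_
      have h2 : Tendsto (fun i => s k * (δ i * ((K:ℝ)-k))) atTop (𝓝 0) := by
        have := (hδ0.mul_const ((K:ℝ)-k)).const_mul (s k)
        simpa only [zero_mul, mul_zero] using this
      have h1 : Tendsto (fun i => c x (π k) + s k * (δ i * ((K:ℝ)-k))) atTop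
          (𝓝 (c x (π k))) := by
        simpa only [add_zero] using (tendsto_const_nhds (x := c x (π k)) (f := atTop)).add h2
      exact h1.smul_const (e (π k))
    have hvlim : Tendsto v atTop (𝓝 0) := by
      have hterm : ∀ n ∈ Finset.range K,
          Tendsto (fun i => (s n * (δ i * ((K:ℝ) - n))) • e (σ n)) atTop (𝓝 0) := by
        intro n _
        have h2 : Tendsto (fun i => s n * (δ i * ((K:ℝ)-n))) atTop (𝓝 0) := by
          have := (hδ0.mul_const ((K:ℝ)-n)).const_mul (s n)
          simpa only [zero_mul, mul_zero] using this
        simpa only [zero_smul] using h2.smul_const (e (σ n))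
      rw [hv]
      have := tendsto_finset_sum (Finset.range K) hterm
      simpa only [Finset.sum_const_zero] using this
    have hnorm : Tendsto (fun i => C * ‖y + v i‖) atTop (𝓝 (C * ‖y‖)) := by
      have := (tendsto_const_nhds (x := y) (f := atTop)).add hvlim
      simpa only [add_zero] using this.norm.const_mul C
    exact le_of_tendsto_of_tendsto' hGlim.norm hnorm key
  have hlim : Tendsto (fun N => C * ‖∑ k ∈ Finset.range N, c x k • e k‖) atTop
      (𝓝 (C * ‖x‖)) := ((hbasic.2 x hx).1.norm).const_mul C
  exact ge_of_tendsto hlim (eventually_atTop.mpr ⟨N₀, step1⟩)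

end Aux

/-- Equivalence of the various formulations of the uniform greedy maximal
inequality with constant `C`.  Here `greedyMax … x (m-1) = ⋁_{n=1}^{m} |G_{π,n}(x)|`. -/
theorem stmt1 {X : Type*} [NormedAddCommGroup X] [Lattice X] [HasSolidNorm X] [IsOrderedAddMonoid X] [NormedSpace ℝ X] [PosSMulStrictMono ℝ X] [PosSMulReflectLT ℝ X]
    [CompleteSpace X]
    (e : ℕ → X) (c : X → ℕ → ℝ) (ρ : X → ℕ → ℕ)
    (hbasic : IsBasicSeq e c) (hsn : SemiNormalized e)
    (hρ : ∀ x ∈ closedSpan e, IsNaturalGreedyOrdering c x (ρ x))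
    (C : ℝ) (hC : 0 < C) :
    List.TFAE
      [ -- (i) all greedy orderings
        ∀ x ∈ closedSpan e, ∀ π : ℕ → ℕ, IsGreedyOrdering c x π →
          ∀ m, ‖greedyMax e c π x m‖ ≤ C * ‖x‖,
        -- (ii) the natural greedy ordering
        ∀ x ∈ closedSpan e, ∀ m, ‖greedyMax e c (ρ x) x m‖ ≤ C * ‖x‖,
        -- (iii) some greedy ordering, for each x and m
        ∀ x ∈ closedSpan e, ∀ m, ∃ π : ℕ → ℕ, IsGreedyOrdering c x π ∧
          ‖greedyMax e c π x m‖ ≤ C * ‖x‖,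
        -- (iv) finitely supported x with pairwise distinct nonzero coefficient moduli
        ∀ x ∈ closedSpan e, ∀ hfin : (coeffSupport c x).Finite,
          (∀ i ∈ coeffSupport c x, ∀ j ∈ coeffSupport c x, i ≠ j → |c x i| ≠ |c x j|) →
          ‖greedyMax e c (ρ x) x (hfin.toFinset.card - 1)‖ ≤ C * ‖x‖,
        -- (v) all finitely supported x
        ∀ x ∈ closedSpan e, ∀ hfin : (coeffSupport c x).Finite,
          ‖greedyMax e c (ρ x) x (hfin.toFinset.card - 1)‖ ≤ C * ‖x‖ ] := by
  tfae_have 1 → 2 := fun h1 x hx m => h1 x hx (ρ x) (hρ x hx).1 m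
  tfae_have 2 → 3 := fun h2 x hx m => ⟨ρ x, (hρ x hx).1, h2 x hx m⟩
  tfae_have 3 → 1 := fun h3 => hard31 hbasic C h3
  tfae_have 2 → 5 := fun h2 x hx hfin => h2 x hx _
  tfae_have 5 → 4 := fun h5 x hx hfin _ => h5 x hx hfin
  tfae_have 4 → 1 := fun h4 => hard41 hbasic ρ hρ C h4
  tfae_finish
end

section
/- Let (e_n) be a uniformly quasi-greedy basic sequence in a Banach lattice, with uniform quasi-greedy constant C_qg^∨. Then: (i) for any distinct indices n_1, …, n_m, ‖⋁_{k=1}^m |Σ_{i=1}^k e_{n_i}|‖ ≤ C_qg^∨ ‖Σ_{i=1}^m e_{n_i}‖; (ii) for any distinct indices n_1, …, n_m and any choice of signs ε_1, …, ε_m ∈ {−1, +1}, (2C_qg^∨)^{−1} ‖⋁_{k=1}^m |Σ_{i=1}^k e_{n_i}|‖ ≤ ‖Σ_{i=1}^m ε_i e_{n_i}‖ ≤ ‖⋁_{k=1}^m |Σ_{i=1}^k ε_i e_{n_i}|‖ ≤ 2C_qg^∨ ‖Σ_{i=1}^m e_{n_i}‖. -/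
open Filter Topology MeasureTheory

lemma partialSups_congr_of_le {α : Type*} [SemilatticeSup α] (f g : ℕ → α) (M : ℕ)
    (h : ∀ k ≤ M, f k = g k) : partialSups f M = partialSups g M := by
  induction M with
  | zero => simpa using h 0 le_rfl
  | succ M IH =>
    rw [← Order.succ_eq_add_one, partialSups_succ, partialSups_succ,
      IH (fun k hk => h k (hk.trans (Nat.le_succ M))), Order.succ_eq_add_one,
      h (M+1) le_rfl]


section MainAux
variable {X : Type*} [NormedAddCommGroup X] [Lattice X] [HasSolidNorm X] [IsOrderedAddMonoid X]
    [NormedSpace ℝ X] [PosSMulStrictMono ℝ X] [PosSMulReflectLT ℝ X]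
    [CompleteSpace X]

lemma core_lemma (e : ℕ → X) (c : X → ℕ → ℝ) (ρ : X → ℕ → ℕ)
    (hbasic : IsBasicSeq e c)
    (hρ : ∀ x ∈ closedSpan e, IsNaturalGreedyOrdering c x (ρ x))
    (C : ℝ)
    (hC : ∀ x ∈ closedSpan e, ∀ m, ‖greedyMax e c (ρ x) x m‖ ≤ C * ‖x‖)
    (m : ℕ) (ν : ℕ → ℕ) (hν : ∀ i j, i ≤ m → j ≤ m → ν i = ν j → i = j)
    (y : ℕ → ℝ) (hy0 : ∀ j, j ≤ m → y j ≠ 0)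
    (hydec : ∀ i j, i < j → j ≤ m → |y j| < |y i|) (M : ℕ) (hM : M ≤ m) :
    ‖partialSups (fun k => |∑ j ∈ Finset.range (k+1), y j • e (ν j)|) M‖ ≤
      C * ‖∑ j ∈ Finset.range (m+1), y j • e (ν j)‖ := by
  classical
  set x : X := ∑ j ∈ Finset.range (m+1), y j • e (ν j) with hxdef
  have hx : x ∈ closedSpan e := by
    apply Submodule.le_topologicalClosure
    exact Submodule.sum_mem _ fun j _ =>
      Submodule.smul_mem _ _ (Submodule.subset_span ⟨ν j, rfl⟩)
  set a : ℕ → ℝ := fun k => ∑ j ∈ (Finset.range (m+1)).filter (fun j => ν j = k), y j with hadef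
  -- partial sums of `a` are eventually `x`
  have hpart : ∀ M', (∀ j ≤ m, ν j < M') →
      ∑ k ∈ Finset.range M', a k • e k = x := by
    intro M' hM'
    have : ∀ k ∈ Finset.range M',
        a k • e k = ∑ j ∈ (Finset.range (m+1)).filter (fun j => ν j = k), y j • e (ν j) := by
      intro k _
      rw [hadef]
      rw [Finset.sum_smul]
      exact Finset.sum_congr rfl fun j hj => by
        rw [(Finset.mem_filter.mp hj).2]
    rw [Finset.sum_congr rfl this, hxdef]
    exact Finset.sum_fiberwise_of_maps_to
      (fun j hj => Finset.mem_range.mpr (hM' j (Nat.lt_succ_iff.mp (Finset.mem_range.mp hj))))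
      (fun j => y j • e (ν j))
  have hconv : Tendsto (fun M' => ∑ k ∈ Finset.range M', a k • e k) atTop (𝓝 x) := by
    apply Tendsto.congr' _ (tendsto_const_nhds (x := x))
    filter_upwards [eventually_ge_atTop ((Finset.range (m+1)).sup ν + 1)] with M' hM'
    exact (hpart M' (fun j hj => lt_of_lt_of_le
      (Nat.lt_succ_of_le (Finset.le_sup (Finset.mem_range.mpr (Nat.lt_succ_of_le hj)))) hM')).symm
  have huniq : a = c x := (hbasic.2 x hx).2 a hconv
  have hfilter : ∀ j ≤ m, (Finset.range (m+1)).filter (fun j' => ν j' = ν j) = {j} := by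
    intro j hj
    ext j'
    simp only [Finset.mem_filter, Finset.mem_range, Finset.mem_singleton, Nat.lt_succ_iff]
    constructor
    · rintro ⟨h1, h2⟩; exact hν j' j h1 hj h2
    · rintro rfl; exact ⟨hj, rfl⟩
  have hcx1 : ∀ j ≤ m, c x (ν j) = y j := by
    intro j hj
    rw [← huniq, hadef]
    simp [hfilter j hj]
  have hcx0 : ∀ k, c x k ≠ 0 → ∃ j, j ≤ m ∧ ν j = k := by
    intro k hk
    by_contra h
    push_neg at h
    apply hk
    rw [← huniq, hadef]
    simp only
    rw [Finset.sum_eq_zero]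
    intro j hj
    simp only [Finset.mem_filter, Finset.mem_range, Nat.lt_succ_iff] at hj
    exact absurd hj.2 (h j hj.1)
  obtain ⟨⟨hσinj, hσcover, hσmono⟩, -⟩ := hρ x hx
  set σ := ρ x with hσdef
  have key : ∀ j, j ≤ m → σ j = ν j := by
    intro j
    induction j using Nat.strong_induction_on with
    | _ j IH =>
      intro hjm
      obtain ⟨k, hk⟩ := hσcover (ν j) (by rw [hcx1 j hjm]; exact hy0 j hjm)
      have hkj : j ≤ k := by
        by_contra h
        push_neg at h
        have := IH k h (h.le.trans hjm)
        rw [this] at hk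
        exact absurd (hν k j (h.le.trans hjm) hjm hk) (Nat.ne_of_lt h)
      rcases eq_or_lt_of_le hkj with rfl | hlt
      · exact hk
      · -- j < k
        have h1 : |y j| ≤ |c x (σ j)| := by
          have := hσmono j k hlt.le
          rwa [hk, hcx1 j hjm] at this
        have h2 : c x (σ j) ≠ 0 := by
          intro h0
          rw [h0, abs_zero] at h1
          exact hy0 j hjm (abs_nonpos_iff.mp h1)
        obtain ⟨l, hlm, hl⟩ := hcx0 (σ j) h2
        rcases lt_trichotomy l j with hlj | rfl | hjl
        · exfalso
          have := IH l hlj hlm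
          rw [hl] at this
          exact absurd (hσinj this) (Nat.ne_of_lt hlj)
        · exact hl.symm
        · exfalso
          rw [← hl, hcx1 l hlm] at h1
          exact absurd (hydec j l hjl hlm) (not_lt.mpr h1)
  have hmax : greedyMax e c σ x M = partialSups (fun k => |∑ j ∈ Finset.range (k+1), y j • e (ν j)|) M := by
    unfold greedyMax
    apply partialSups_congr_of_le
    intro k hk
    congr 1
    unfold greedySum
    apply Finset.sum_congr rfl
    intro j hj
    have hjm : j ≤ m := le_trans (Nat.lt_succ_iff.mp (Finset.mem_range.mp hj)) (hk.trans hM)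
    rw [key j hjm, hcx1 j hjm]
  rw [← hmax]
  exact hC x hx M


lemma continuous_partialSups_param {f : ℝ → ℕ → X} (h : ∀ k, Continuous fun δ => f δ k) (M : ℕ) :
    Continuous fun δ => partialSups (f δ) M := by
  induction M with
  | zero => simpa using h 0
  | succ M IH => simpa [partialSups_succ] using IH.sup (h (M+1))

lemma core_limit (e : ℕ → X) (c : X → ℕ → ℝ) (ρ : X → ℕ → ℕ)
    (hbasic : IsBasicSeq e c)
    (hρ : ∀ x ∈ closedSpan e, IsNaturalGreedyOrdering c x (ρ x))
    (C : ℝ)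
    (hC : ∀ x ∈ closedSpan e, ∀ m, ‖greedyMax e c (ρ x) x m‖ ≤ C * ‖x‖)
    (m : ℕ) (ν : ℕ → ℕ) (hν : ∀ i j, i ≤ m → j ≤ m → ν i = ν j → i = j)
    (s : ℕ → ℝ) (hs : ∀ j, j ≤ m → |s j| = 1) (M : ℕ) (hM : M ≤ m) :
    ‖partialSups (fun k => |∑ j ∈ Finset.range (k+1), s j • e (ν j)|) M‖ ≤
      C * ‖∑ j ∈ Finset.range (m+1), s j • e (ν j)‖ := by
  set F : ℝ → ℝ := fun δ =>
    ‖partialSups (fun k => |∑ j ∈ Finset.range (k+1), (s j * (1+δ)^(m-j)) • e (ν j)|) M‖ with hF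
  set G : ℝ → ℝ := fun δ =>
    C * ‖∑ j ∈ Finset.range (m+1), (s j * (1+δ)^(m-j)) • e (ν j)‖ with hG
  have key : ∀ δ ∈ Set.Ioi (0:ℝ), F δ ≤ G δ := by
    intro δ hδ
    rw [Set.mem_Ioi] at hδ
    refine core_lemma e c ρ hbasic hρ C hC m ν hν (fun j => s j * (1+δ)^(m-j)) ?_ ?_ M hM
    · intro j hj
      apply mul_ne_zero
      · intro h0
        have hx1 := hs j hj
        rw [h0, abs_zero] at hx1
        exact one_ne_zero hx1.symm
      · exact ne_of_gt (pow_pos (by linarith) _)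
    · intro i j hij hjm
      have h1 : (1:ℝ) < 1 + δ := by linarith
      have h2 : m - j < m - i := by omega
      calc |s j * (1+δ)^(m-j)| = (1+δ)^(m-j) := by
            rw [abs_mul, hs j hjm, one_mul, abs_of_pos (pow_pos (by linarith) _)]
        _ < (1+δ)^(m-i) := pow_lt_pow_right₀ h1 h2
        _ = |s i * (1+δ)^(m-i)| := by
            rw [abs_mul, hs i (hij.le.trans hjm), one_mul,
              abs_of_pos (pow_pos (by linarith) _)]
  have habs : ∀ g : ℝ → X, Continuous g → Continuous fun δ => |g δ| := by
    intro g hg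
    have : ∀ δ, |g δ| = g δ ⊔ -g δ := fun δ => rfl
    simp only [this]
    exact hg.sup hg.neg
  have hterm : ∀ (K : ℕ), Continuous fun δ : ℝ => ∑ j ∈ Finset.range K, (s j * (1+δ)^(m-j)) • e (ν j) := by
    intro K
    apply continuous_finset_sum
    intro j _
    exact (continuous_const.mul ((continuous_const.add continuous_id).pow _)).smul continuous_const
  have hFc : Continuous F := by
    apply Continuous.norm
    exact continuous_partialSups_param (fun k => habs _ (hterm (k+1))) M
  have hGc : Continuous G := continuous_const.mul (hterm (m+1)).norm
  have hle : F 0 ≤ G 0 := by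
    refine le_of_tendsto_of_tendsto
      (tendsto_nhdsWithin_of_tendsto_nhds (hFc.tendsto 0))
      (tendsto_nhdsWithin_of_tendsto_nhds (hGc.tendsto 0))
      (eventually_mem_nhdsWithin.mono key) (b := 𝓝[>] (0:ℝ))
  rw [hF, hG] at hle
  simp only [add_zero, one_pow, mul_one] at hle
  exact hle


lemma nth_lt_of_lt_count {p : ℕ → Prop} [DecidablePred p] (hp : (setOf p).Infinite)
    {j K : ℕ} (h : j < Nat.count p K) : Nat.nth p j < K := by
  by_contra hK
  push_neg at hK
  have := Nat.count_monotone p hK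
  rw [Nat.count_nth (fun hf => absurd hf hp)] at this
  omega

lemma nth_sum {M : Type*} [AddCommMonoid M] (p : ℕ → Prop) [DecidablePred p]
    (hp : (setOf p).Infinite) (G : ℕ → M) (K : ℕ) :
    ∑ i ∈ (Finset.range K).filter p, G i = ∑ j ∈ Finset.range (Nat.count p K), G (Nat.nth p j) := by
  refine Finset.sum_nbij' (fun i => Nat.count p i) (fun j => Nat.nth p j) ?_ ?_ ?_ ?_ ?_
  · intro i hi
    simp only [Finset.mem_filter, Finset.mem_range] at hi ⊢
    calc Nat.count p i < Nat.count p (i+1) := by simp [Nat.count_succ, hi.2]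
    _ ≤ Nat.count p K := Nat.count_monotone p hi.1
  · intro j hj
    simp only [Finset.mem_range] at hj
    simp only [Finset.mem_filter, Finset.mem_range]
    exact ⟨nth_lt_of_lt_count hp hj, Nat.nth_mem_of_infinite hp j⟩
  · intro i hi
    simp only [Finset.mem_filter] at hi
    exact Nat.nth_count hi.2
  · intro j _
    exact Nat.count_nth (fun hf => absurd hf hp)
  · intro i hi
    simp only [Finset.mem_filter] at hi
    rw [Nat.nth_count hi.2]

lemma norm_le_norm_of_abs_le {a b : X} (h : |a| ≤ b) : ‖a‖ ≤ ‖b‖ :=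
  HasSolidNorm.solid (by rwa [abs_of_nonneg (le_trans (abs_nonneg a) h)])

lemma partialSups_abs_nonneg (f : ℕ → X) (M : ℕ) : (0:X) ≤ partialSups (fun k => |f k|) M :=
  le_trans (abs_nonneg (f 0)) (le_partialSups_of_le (fun k => |f k|) (Nat.zero_le M))

lemma abs_sub_le_abs_add_abs (x y : X) : |x - y| ≤ |x| + |y| := by
  calc |x - y| = |x + -y| := by rw [sub_eq_add_neg]
    _ ≤ |x| + |-y| := abs_add_le x (-y)
    _ = |x| + |y| := by rw [abs_neg]

lemma abs_sum_range_le_partialSups (g h : ℕ → X) (r M : ℕ) (hr : r ≤ M + 1)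
    (heq : ∀ j < r, g j = h j) :
    |∑ j ∈ Finset.range r, g j| ≤ partialSups (fun k => |∑ j ∈ Finset.range (k+1), h j|) M := by
  rcases r with - | r'
  · simpa using partialSups_abs_nonneg (fun k => ∑ j ∈ Finset.range (k+1), h j) M
  · have hgh : ∑ j ∈ Finset.range (r'+1), g j = ∑ j ∈ Finset.range (r'+1), h j :=
      Finset.sum_congr rfl fun j hj => heq j (Finset.mem_range.mp hj)
    rw [hgh]
    exact le_partialSups_of_le (fun k => |∑ j ∈ Finset.range (k+1), h j|) (Nat.lt_succ_iff.mp hr)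
end MainAux



/-- A uniformly quasi-greedy basic sequence is unconditional for constant
coefficients, with the stated maximal-function bounds.  Indices `n 0, …, n m` play the role
of `n_1, …, n_{m+1}`, and `partialSups (fun k => |Σ_{i ≤ k} …|) m = ⋁_{k=1}^{m+1} |Σ_{i=1}^k …|`. -/
theorem stmt6 {X : Type*} [NormedAddCommGroup X] [Lattice X] [HasSolidNorm X] [IsOrderedAddMonoid X]
    [NormedSpace ℝ X] [PosSMulStrictMono ℝ X] [PosSMulReflectLT ℝ X]
    [CompleteSpace X]
    (e : ℕ → X) (c : X → ℕ → ℝ) (ρ : X → ℕ → ℕ)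
    (hbasic : IsBasicSeq e c) (hsn : SemiNormalized e)
    (hρ : ∀ x ∈ closedSpan e, IsNaturalGreedyOrdering c x (ρ x))
    (C : ℝ) (hC1 : 1 ≤ C)
    -- (e_n) is uniformly quasi-greedy with constant C
    (hC : ∀ x ∈ closedSpan e, ∀ m, ‖greedyMax e c (ρ x) x m‖ ≤ C * ‖x‖)
    (m : ℕ) (n : ℕ → ℕ) (hinj : ∀ i j, i ≤ m → j ≤ m → n i = n j → i = j) :
    -- (i)
    (‖partialSups (fun k => |∑ i ∈ Finset.range (k + 1), e (n i)|) m‖ ≤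
      C * ‖∑ i ∈ Finset.range (m + 1), e (n i)‖) ∧
    -- (ii)
    (∀ ε : ℕ → ℝ, (∀ i, ε i = 1 ∨ ε i = -1) →
      (2 * C)⁻¹ * ‖partialSups (fun k => |∑ i ∈ Finset.range (k + 1), e (n i)|) m‖ ≤
        ‖∑ i ∈ Finset.range (m + 1), ε i • e (n i)‖ ∧
      ‖∑ i ∈ Finset.range (m + 1), ε i • e (n i)‖ ≤
        ‖partialSups (fun k => |∑ i ∈ Finset.range (k + 1), ε i • e (n i)|) m‖ ∧
      ‖partialSups (fun k => |∑ i ∈ Finset.range (k + 1), ε i • e (n i)|) m‖ ≤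
        2 * C * ‖∑ i ∈ Finset.range (m + 1), e (n i)‖) := by
  classical
  have part1 : ‖partialSups (fun k => |∑ i ∈ Finset.range (k + 1), e (n i)|) m‖ ≤
      C * ‖∑ i ∈ Finset.range (m + 1), e (n i)‖ := by
    have h := core_limit e c ρ hbasic hρ C hC m n hinj (fun _ => 1) (by simp) m le_rfl
    simpa only [one_smul] using h
  refine ⟨part1, ?_⟩
  intro ε hε
  have hεnot : ∀ i, (¬ ε i = 1) ↔ ε i = -1 := by
    intro i; rcases hε i with h | h <;> rw [h] <;> norm_num
  set pA : ℕ → Prop := fun i => (i ≤ m ∧ ε i = 1) ∨ m < i with hpA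
  set pB : ℕ → Prop := fun i => (i ≤ m ∧ ε i = -1) ∨ m < i with hpB
  have hpA' : ∀ i, pA i ↔ ((i ≤ m ∧ ε i = 1) ∨ m < i) := fun i => by rw [hpA]
  have hpB' : ∀ i, pB i ↔ ((i ≤ m ∧ ε i = -1) ∨ m < i) := fun i => by rw [hpB]
  have hAinf : (setOf pA).Infinite := (Set.Ioi_infinite m).mono (fun i hi => Or.inr hi)
  have hBinf : (setOf pB).Infinite := (Set.Ioi_infinite m).mono (fun i hi => Or.inr hi)
  set a := Nat.count pA (m+1) with ha
  set b := Nat.count pB (m+1) with hb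
  have hfilterA : ∀ K, K ≤ m+1 →
      (Finset.range K).filter pA = (Finset.range K).filter (fun i => ε i = 1) := by
    intro K hK
    apply Finset.filter_congr
    intro i hi
    have him : i ≤ m := by
      have := Finset.mem_range.mp hi; omega
    constructor
    · rintro (⟨-, h2⟩ | h2)
      · exact h2
      · omega
    · intro h2; exact Or.inl ⟨him, h2⟩
  have hfilterB : ∀ K, K ≤ m+1 →
      (Finset.range K).filter pB = (Finset.range K).filter (fun i => ε i = -1) := by
    intro K hK
    apply Finset.filter_congr
    intro i hi
    have him : i ≤ m := by
      have := Finset.mem_range.mp hi; omega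
    constructor
    · rintro (⟨-, h2⟩ | h2)
      · exact h2
      · omega
    · intro h2; exact Or.inl ⟨him, h2⟩
  have hfilterNot : ∀ K, (Finset.range K).filter (fun i => ¬ ε i = 1)
      = (Finset.range K).filter (fun i => ε i = -1) := by
    intro K
    apply Finset.filter_congr
    intro i _
    exact hεnot i
  have hab : a + b = m + 1 := by
    rw [ha, hb, Nat.count_eq_card_filter_range, Nat.count_eq_card_filter_range,
      hfilterA (m+1) le_rfl, hfilterB (m+1) le_rfl, ← hfilterNot (m+1),
      Finset.card_filter_add_card_filter_not, Finset.card_range]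
  have hnthA : ∀ j, j < a → Nat.nth pA j ≤ m ∧ ε (Nat.nth pA j) = 1 := by
    intro j hj
    have h1 : Nat.nth pA j < m+1 := nth_lt_of_lt_count hAinf hj
    have h2 := Nat.nth_mem_of_infinite hAinf j
    rcases (hpA' _).mp h2 with ⟨h3, h4⟩ | h3
    · exact ⟨h3, h4⟩
    · omega
  have hnthB : ∀ j, j < b → Nat.nth pB j ≤ m ∧ ε (Nat.nth pB j) = -1 := by
    intro j hj
    have h1 : Nat.nth pB j < m+1 := nth_lt_of_lt_count hBinf hj
    have h2 := Nat.nth_mem_of_infinite hBinf j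
    rcases (hpB' _).mp h2 with ⟨h3, h4⟩ | h3
    · exact ⟨h3, h4⟩
    · omega
  set idxA : ℕ → ℕ := fun j => if j < a then Nat.nth pA j else Nat.nth pB (j - a) with hidxA
  set idxB : ℕ → ℕ := fun j => if j < b then Nat.nth pB j else Nat.nth pA (j - b) with hidxB
  have hidxA1 : ∀ j, j < a → idxA j ≤ m ∧ ε (idxA j) = 1 := by
    intro j hj
    simp only [hidxA, if_pos hj]
    exact hnthA j hj
  have hidxA2 : ∀ j, a ≤ j → j ≤ m → idxA j ≤ m ∧ ε (idxA j) = -1 := by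
    intro j hj1 hj2
    simp only [hidxA, if_neg (not_lt.mpr hj1)]
    exact hnthB _ (by omega)
  have hidxB1 : ∀ j, j < b → idxB j ≤ m ∧ ε (idxB j) = -1 := by
    intro j hj
    simp only [hidxB, if_pos hj]
    exact hnthB j hj
  have hidxB2 : ∀ j, b ≤ j → j ≤ m → idxB j ≤ m ∧ ε (idxB j) = 1 := by
    intro j hj1 hj2
    simp only [hidxB, if_neg (not_lt.mpr hj1)]
    exact hnthA _ (by omega)
  have hidxA_le : ∀ j, j ≤ m → idxA j ≤ m := by
    intro j hj
    by_cases h : j < a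
    · exact (hidxA1 j h).1
    · exact (hidxA2 j (not_lt.mp h) hj).1
  have hidxB_le : ∀ j, j ≤ m → idxB j ≤ m := by
    intro j hj
    by_cases h : j < b
    · exact (hidxB1 j h).1
    · exact (hidxB2 j (not_lt.mp h) hj).1
  have hinjA : ∀ i j, i ≤ m → j ≤ m → n (idxA i) = n (idxA j) → i = j := by
    intro i j hi hj hEq
    have hIdxEq : idxA i = idxA j := hinj _ _ (hidxA_le i hi) (hidxA_le j hj) hEq
    by_cases h1 : i < a <;> by_cases h2 : j < a
    · have := hIdxEq
      simp only [hidxA, if_pos h1, if_pos h2] at this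
      exact Nat.nth_injective hAinf this
    · exfalso
      have e1 := (hidxA1 i h1).2
      have e2 := (hidxA2 j (not_lt.mp h2) hj).2
      rw [hIdxEq, e2] at e1
      norm_num at e1
    · exfalso
      have e1 := (hidxA2 i (not_lt.mp h1) hi).2
      have e2 := (hidxA1 j h2).2
      rw [hIdxEq, e2] at e1
      norm_num at e1
    · have := hIdxEq
      simp only [hidxA, if_neg h1, if_neg h2] at this
      have := Nat.nth_injective hBinf this
      omega
  have hinjB : ∀ i j, i ≤ m → j ≤ m → n (idxB i) = n (idxB j) → i = j := by
    intro i j hi hj hEq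
    have hIdxEq : idxB i = idxB j := hinj _ _ (hidxB_le i hi) (hidxB_le j hj) hEq
    by_cases h1 : i < b <;> by_cases h2 : j < b
    · have := hIdxEq
      simp only [hidxB, if_pos h1, if_pos h2] at this
      exact Nat.nth_injective hBinf this
    · exfalso
      have e1 := (hidxB1 i h1).2
      have e2 := (hidxB2 j (not_lt.mp h2) hj).2
      rw [hIdxEq, e2] at e1
      norm_num at e1
    · exfalso
      have e1 := (hidxB2 i (not_lt.mp h1) hi).2
      have e2 := (hidxB1 j h2).2
      rw [hIdxEq, e2] at e1
      norm_num at e1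
    · have := hIdxEq
      simp only [hidxB, if_neg h1, if_neg h2] at this
      have := Nat.nth_injective hAinf this
      omega
  -- splitting the full sum
  have hsplitA : ∀ G : ℕ → X,
      ∑ j ∈ Finset.range (m+1), G (idxA j) = ∑ i ∈ Finset.range (m+1), G i := by
    intro G
    rw [← Finset.sum_range_add_sum_Ico (fun j => G (idxA j)) (by omega : a ≤ m+1)]
    have e2 : ∑ j ∈ Finset.range a, G (idxA j) = ∑ j ∈ Finset.range a, G (Nat.nth pA j) := by
      apply Finset.sum_congr rfl
      intro j hj
      simp only [hidxA, if_pos (Finset.mem_range.mp hj)]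
    have e3 : ∑ j ∈ Finset.Ico a (m+1), G (idxA j) = ∑ j ∈ Finset.range b, G (Nat.nth pB j) := by
      rw [Finset.sum_Ico_eq_sum_range]
      have hba : m + 1 - a = b := by omega
      rw [hba]
      apply Finset.sum_congr rfl
      intro j _
      simp only [hidxA, if_neg (by omega : ¬ a + j < a), Nat.add_sub_cancel_left]
    rw [e2, e3, ha, hb, ← nth_sum pA hAinf G (m+1), ← nth_sum pB hBinf G (m+1),
      hfilterA (m+1) le_rfl, hfilterB (m+1) le_rfl, ← hfilterNot (m+1),
      Finset.sum_filter_add_sum_filter_not]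
  have hsplitB : ∀ G : ℕ → X,
      ∑ j ∈ Finset.range (m+1), G (idxB j) = ∑ i ∈ Finset.range (m+1), G i := by
    intro G
    rw [← Finset.sum_range_add_sum_Ico (fun j => G (idxB j)) (by omega : b ≤ m+1)]
    have e2 : ∑ j ∈ Finset.range b, G (idxB j) = ∑ j ∈ Finset.range b, G (Nat.nth pB j) := by
      apply Finset.sum_congr rfl
      intro j hj
      simp only [hidxB, if_pos (Finset.mem_range.mp hj)]
    have e3 : ∑ j ∈ Finset.Ico b (m+1), G (idxB j) = ∑ j ∈ Finset.range a, G (Nat.nth pA j) := by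
      rw [Finset.sum_Ico_eq_sum_range]
      have hba : m + 1 - b = a := by omega
      rw [hba]
      apply Finset.sum_congr rfl
      intro j _
      simp only [hidxB, if_neg (by omega : ¬ b + j < b), Nat.add_sub_cancel_left]
    rw [e2, e3, ha, hb, ← nth_sum pA hAinf G (m+1), ← nth_sum pB hBinf G (m+1),
      hfilterA (m+1) le_rfl, hfilterB (m+1) le_rfl, ← hfilterNot (m+1), add_comm,
      Finset.sum_filter_add_sum_filter_not]
  -- prefix sums
  have hprefA : ∀ (G : ℕ → X) (k : ℕ), k ≤ m →
      ∑ i ∈ (Finset.range (k+1)).filter (fun i => ε i = 1), G i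
        = ∑ j ∈ Finset.range (Nat.count pA (k+1)), G (idxA j) := by
    intro G k hk
    rw [← hfilterA (k+1) (by omega), nth_sum pA hAinf G (k+1)]
    apply Finset.sum_congr rfl
    intro j hj
    have hja : j < a := lt_of_lt_of_le (Finset.mem_range.mp hj) (Nat.count_monotone pA (by omega))
    simp only [hidxA, if_pos hja]
  have hprefB : ∀ (G : ℕ → X) (k : ℕ), k ≤ m →
      ∑ i ∈ (Finset.range (k+1)).filter (fun i => ε i = -1), G i
        = ∑ j ∈ Finset.range (Nat.count pB (k+1)), G (idxB j) := by
    intro G k hk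
    rw [← hfilterB (k+1) (by omega), nth_sum pB hBinf G (k+1)]
    apply Finset.sum_congr rfl
    intro j hj
    have hjb : j < b := lt_of_lt_of_le (Finset.mem_range.mp hj) (Nat.count_monotone pB (by omega))
    simp only [hidxB, if_pos hjb]
  have hcntA : ∀ k, k ≤ m → Nat.count pA (k+1) ≤ m + 1 := by
    intro k hk
    have : Nat.count pA (k+1) ≤ a := Nat.count_monotone pA (by omega)
    omega
  have hcntB : ∀ k, k ≤ m → Nat.count pB (k+1) ≤ m + 1 := by
    intro k hk
    have : Nat.count pB (k+1) ≤ b := Nat.count_monotone pB (by omega)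
    omega
  -- decompositions
  have hdecomp : ∀ k, ∑ i ∈ Finset.range (k+1), ε i • e (n i)
      = (∑ i ∈ (Finset.range (k+1)).filter (fun i => ε i = 1), e (n i))
        - (∑ i ∈ (Finset.range (k+1)).filter (fun i => ε i = -1), e (n i)) := by
    intro k
    rw [Finset.sum_filter, Finset.sum_filter, ← Finset.sum_sub_distrib]
    apply Finset.sum_congr rfl
    intro i _
    rcases hε i with h | h <;> rw [h]
    · rw [if_pos rfl, if_neg (by norm_num), sub_zero, one_smul]
    · rw [if_neg (by norm_num), if_pos rfl, zero_sub, neg_one_smul]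
  have hdecompE : ∀ k, ∑ i ∈ Finset.range (k+1), e (n i)
      = (∑ i ∈ (Finset.range (k+1)).filter (fun i => ε i = 1), e (n i))
        + (∑ i ∈ (Finset.range (k+1)).filter (fun i => ε i = -1), e (n i)) := by
    intro k
    rw [← hfilterNot (k+1), Finset.sum_filter_add_sum_filter_not]
  -- norm bounds from core_limit
  have hPnorm : ‖partialSups (fun k => |∑ j ∈ Finset.range (k+1), e (n (idxA j))|) m‖
      ≤ C * ‖∑ i ∈ Finset.range (m+1), e (n i)‖ := by
    have h := core_limit e c ρ hbasic hρ C hC m (fun j => n (idxA j)) hinjA (fun _ => 1)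
      (by simp) m le_rfl
    simp only [one_smul] at h
    rwa [hsplitA (fun i => e (n i))] at h
  have hQnorm : ‖partialSups (fun k => |∑ j ∈ Finset.range (k+1), e (n (idxB j))|) m‖
      ≤ C * ‖∑ i ∈ Finset.range (m+1), e (n i)‖ := by
    have h := core_limit e c ρ hbasic hρ C hC m (fun j => n (idxB j)) hinjB (fun _ => 1)
      (by simp) m le_rfl
    simp only [one_smul] at h
    rwa [hsplitB (fun i => e (n i))] at h
  -- signed versions
  set sA : ℕ → ℝ := fun j => if j < a then (1:ℝ) else -1 with hsA
  set sB : ℕ → ℝ := fun j => if j < b then (-1:ℝ) else 1 with hsB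
  have hsAabs : ∀ j, j ≤ m → |sA j| = 1 := by
    intro j _
    simp only [hsA]
    by_cases h : j < a <;> simp [h]
  have hsBabs : ∀ j, j ≤ m → |sB j| = 1 := by
    intro j _
    simp only [hsB]
    by_cases h : j < b <;> simp [h]
  have hP'norm : ‖partialSups (fun k => |∑ j ∈ Finset.range (k+1), sA j • e (n (idxA j))|) m‖
      ≤ C * ‖∑ i ∈ Finset.range (m+1), ε i • e (n i)‖ := by
    have h := core_limit e c ρ hbasic hρ C hC m (fun j => n (idxA j)) hinjA sA hsAabs m le_rfl
    have hsum : ∑ j ∈ Finset.range (m+1), sA j • e (n (idxA j))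
        = ∑ i ∈ Finset.range (m+1), ε i • e (n i) := by
      rw [← hsplitA (fun i => ε i • e (n i))]
      apply Finset.sum_congr rfl
      intro j hj
      have hjm : j ≤ m := by
        have := Finset.mem_range.mp hj; omega
      by_cases h' : j < a
      · simp only [hsA, if_pos h', (hidxA1 j h').2, one_smul]
      · simp only [hsA, if_neg h', (hidxA2 j (not_lt.mp h') hjm).2]
    rwa [hsum] at h
  have hQ'norm : ‖partialSups (fun k => |∑ j ∈ Finset.range (k+1), sB j • e (n (idxB j))|) m‖
      ≤ C * ‖∑ i ∈ Finset.range (m+1), ε i • e (n i)‖ := by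
    have h := core_limit e c ρ hbasic hρ C hC m (fun j => n (idxB j)) hinjB sB hsBabs m le_rfl
    have hsum : ∑ j ∈ Finset.range (m+1), sB j • e (n (idxB j))
        = ∑ i ∈ Finset.range (m+1), ε i • e (n i) := by
      rw [← hsplitB (fun i => ε i • e (n i))]
      apply Finset.sum_congr rfl
      intro j hj
      have hjm : j ≤ m := by
        have := Finset.mem_range.mp hj; omega
      by_cases h' : j < b
      · simp only [hsB, if_pos h', (hidxB1 j h').2]
      · simp only [hsB, if_neg h', (hidxB2 j (not_lt.mp h') hjm).2, one_smul]
    rwa [hsum] at h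
  -- prefix bounds
  have hSA_P : ∀ k, k ≤ m →
      |∑ i ∈ (Finset.range (k+1)).filter (fun i => ε i = 1), e (n i)|
        ≤ partialSups (fun k' => |∑ j ∈ Finset.range (k'+1), e (n (idxA j))|) m := by
    intro k hk
    rw [hprefA (fun i => e (n i)) k hk]
    exact abs_sum_range_le_partialSups _ _ _ m (hcntA k hk) (fun j _ => rfl)
  have hSB_Q : ∀ k, k ≤ m →
      |∑ i ∈ (Finset.range (k+1)).filter (fun i => ε i = -1), e (n i)|
        ≤ partialSups (fun k' => |∑ j ∈ Finset.range (k'+1), e (n (idxB j))|) m := by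
    intro k hk
    rw [hprefB (fun i => e (n i)) k hk]
    exact abs_sum_range_le_partialSups _ _ _ m (hcntB k hk) (fun j _ => rfl)
  have hSA_P' : ∀ k, k ≤ m →
      |∑ i ∈ (Finset.range (k+1)).filter (fun i => ε i = 1), e (n i)|
        ≤ partialSups (fun k' => |∑ j ∈ Finset.range (k'+1), sA j • e (n (idxA j))|) m := by
    intro k hk
    rw [hprefA (fun i => e (n i)) k hk]
    apply abs_sum_range_le_partialSups _ _ _ m (hcntA k hk)
    intro j hj
    have hja : j < a := lt_of_lt_of_le hj (Nat.count_monotone pA (by omega))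
    simp only [hsA, if_pos hja, one_smul]
  have hSB_Q' : ∀ k, k ≤ m →
      |∑ i ∈ (Finset.range (k+1)).filter (fun i => ε i = -1), e (n i)|
        ≤ partialSups (fun k' => |∑ j ∈ Finset.range (k'+1), sB j • e (n (idxB j))|) m := by
    intro k hk
    rw [hprefB (fun i => e (n i)) k hk]
    rw [← abs_neg, ← Finset.sum_neg_distrib]
    apply abs_sum_range_le_partialSups _ _ _ m (hcntB k hk)
    intro j hj
    have hjb : j < b := lt_of_lt_of_le hj (Nat.count_monotone pB (by omega))
    simp only [hsB, if_pos hjb, neg_one_smul]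
  -- goal (ii).2
  have goal2 : ‖∑ i ∈ Finset.range (m + 1), ε i • e (n i)‖ ≤
      ‖partialSups (fun k => |∑ i ∈ Finset.range (k + 1), ε i • e (n i)|) m‖ :=
    norm_le_norm_of_abs_le
      (le_partialSups_of_le (fun k => |∑ i ∈ Finset.range (k + 1), ε i • e (n i)|) le_rfl)
  -- goal (ii).3
  have goal3 : ‖partialSups (fun k => |∑ i ∈ Finset.range (k + 1), ε i • e (n i)|) m‖ ≤
      2 * C * ‖∑ i ∈ Finset.range (m + 1), e (n i)‖ := by
    set P := partialSups (fun k' => |∑ j ∈ Finset.range (k'+1), e (n (idxA j))|) m with hPdef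
    set Q := partialSups (fun k' => |∑ j ∈ Finset.range (k'+1), e (n (idxB j))|) m with hQdef
    have hle : partialSups (fun k => |∑ i ∈ Finset.range (k + 1), ε i • e (n i)|) m ≤ P + Q := by
      apply partialSups_le
      intro k hk
      rw [hdecomp k]
      calc |(∑ i ∈ (Finset.range (k+1)).filter (fun i => ε i = 1), e (n i))
            - (∑ i ∈ (Finset.range (k+1)).filter (fun i => ε i = -1), e (n i))|
          ≤ |∑ i ∈ (Finset.range (k+1)).filter (fun i => ε i = 1), e (n i)|
            + |∑ i ∈ (Finset.range (k+1)).filter (fun i => ε i = -1), e (n i)| :=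
            abs_sub_le_abs_add_abs _ _
        _ ≤ P + Q := add_le_add (hSA_P k hk) (hSB_Q k hk)
    have h0 : (0:X) ≤ partialSups (fun k => |∑ i ∈ Finset.range (k + 1), ε i • e (n i)|) m :=
      partialSups_abs_nonneg _ m
    calc ‖partialSups (fun k => |∑ i ∈ Finset.range (k + 1), ε i • e (n i)|) m‖
        ≤ ‖P + Q‖ := norm_le_norm_of_abs_le (by rwa [abs_of_nonneg h0])
      _ ≤ ‖P‖ + ‖Q‖ := norm_add_le P Q
      _ ≤ C * ‖∑ i ∈ Finset.range (m+1), e (n i)‖ + C * ‖∑ i ∈ Finset.range (m+1), e (n i)‖ :=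
          add_le_add hPnorm hQnorm
      _ = 2 * C * ‖∑ i ∈ Finset.range (m + 1), e (n i)‖ := by ring
  -- goal (ii).1
  have goal1pre : ‖partialSups (fun k => |∑ i ∈ Finset.range (k + 1), e (n i)|) m‖ ≤
      2 * C * ‖∑ i ∈ Finset.range (m + 1), ε i • e (n i)‖ := by
    set P := partialSups (fun k' => |∑ j ∈ Finset.range (k'+1), sA j • e (n (idxA j))|) m with hPdef
    set Q := partialSups (fun k' => |∑ j ∈ Finset.range (k'+1), sB j • e (n (idxB j))|) m with hQdef
    have hle : partialSups (fun k => |∑ i ∈ Finset.range (k + 1), e (n i)|) m ≤ P + Q := by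
      apply partialSups_le
      intro k hk
      rw [hdecompE k]
      calc |(∑ i ∈ (Finset.range (k+1)).filter (fun i => ε i = 1), e (n i))
            + (∑ i ∈ (Finset.range (k+1)).filter (fun i => ε i = -1), e (n i))|
          ≤ |∑ i ∈ (Finset.range (k+1)).filter (fun i => ε i = 1), e (n i)|
            + |∑ i ∈ (Finset.range (k+1)).filter (fun i => ε i = -1), e (n i)| :=
            abs_add_le _ _
        _ ≤ P + Q := add_le_add (hSA_P' k hk) (hSB_Q' k hk)
    have h0 : (0:X) ≤ partialSups (fun k => |∑ i ∈ Finset.range (k + 1), e (n i)|) m :=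
      partialSups_abs_nonneg _ m
    calc ‖partialSups (fun k => |∑ i ∈ Finset.range (k + 1), e (n i)|) m‖
        ≤ ‖P + Q‖ := norm_le_norm_of_abs_le (by rwa [abs_of_nonneg h0])
      _ ≤ ‖P‖ + ‖Q‖ := norm_add_le P Q
      _ ≤ C * ‖∑ i ∈ Finset.range (m+1), ε i • e (n i)‖
            + C * ‖∑ i ∈ Finset.range (m+1), ε i • e (n i)‖ := add_le_add hP'norm hQ'norm
      _ = 2 * C * ‖∑ i ∈ Finset.range (m + 1), ε i • e (n i)‖ := by ring
  refine ⟨?_, goal2, goal3⟩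
  rw [inv_mul_le_iff₀ (by linarith : (0:ℝ) < 2 * C)]
  exact goal1pre
end

section
/- Let (e_n) be a uniformly quasi-greedy basic sequence in a Banach lattice, with uniform quasi-greedy constant C_qg^∨ and quasi-greedy constant C_qg. Then for every x ∈ E and every ordered finite set A = {n_1, …, n_m} ⊆ supp(x) of distinct indices, ‖⋁_{i=1}^m |Σ_{k=1}^i e*_{n_k}(x) e_{n_k}|‖ ≤ 8 C_qg² C_qg^∨ · (max{|e_n*(x)| : n ∈ A} / min{|e_n*(x)| : n ∈ A}) · ‖x‖. -/
open Filter Topology MeasureTheory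

set_option linter.unusedSectionVars false
set_option maxHeartbeats 1000000

section helpers
variable {X : Type*} [NormedAddCommGroup X] [Lattice X] [HasSolidNorm X] [IsOrderedAddMonoid X]
    [NormedSpace ℝ X] [PosSMulStrictMono ℝ X] [PosSMulReflectLT ℝ X]

variable {X : Type*} [NormedAddCommGroup X] [Lattice X] [HasSolidNorm X] [IsOrderedAddMonoid X]
    [NormedSpace ℝ X] [PosSMulStrictMono ℝ X] [PosSMulReflectLT ℝ X]

lemma my_smul_sup (r : ℝ) (hr : 0 ≤ r) (a b : X) : r • (a ⊔ b) = r • a ⊔ r • b := by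
  rcases hr.eq_or_lt with h | h
  · simp [← h, sup_idem]
  · exact (OrderIso.smulRight h).map_sup a b

lemma my_abs_smul (r : ℝ) (v : X) : |r • v| = |r| • |v| := by
  rcases le_or_gt 0 r with h | h
  · rw [abs_of_nonneg h, abs, abs, my_smul_sup r h, smul_neg]
  · have : r • v = (-r) • (-v) := by simp
    rw [this, abs_of_neg h, abs, abs, my_smul_sup (-r) (by linarith), smul_neg, neg_neg, sup_comm]

lemma my_conv_abs (l1 l2 : ℝ) (h1 : 0 ≤ l1) (h2 : 0 ≤ l2) (u v : X) :
    |l1 • u + l2 • v| ≤ l1 • |u| + l2 • |v| := by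
  refine abs_le'.2 ⟨?_, ?_⟩
  · exact add_le_add (smul_le_smul_of_nonneg_left (le_abs_self u) h1)
      (smul_le_smul_of_nonneg_left (le_abs_self v) h2)
  · rw [neg_add, ← smul_neg, ← smul_neg]
    exact add_le_add (smul_le_smul_of_nonneg_left (neg_le_abs u) h1)
      (smul_le_smul_of_nonneg_left (neg_le_abs v) h2)

lemma my_norm_mono {u v : X} (hu : 0 ≤ u) (huv : u ≤ v) : ‖u‖ ≤ ‖v‖ :=
  norm_le_norm_of_abs_le_abs (by rwa [abs_of_nonneg hu, abs_of_nonneg (hu.trans huv)])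

lemma my_partialSups_nonneg (f : ℕ → X) (m : ℕ) : 0 ≤ partialSups (fun i => |f i|) m :=
  (abs_nonneg (f 0)).trans (le_partialSups_of_le (fun i => |f i|) (Nat.zero_le m))

lemma my_partialSups_add_le (f g : ℕ → X) (h : X) (m : ℕ)
    (hfg : ∀ i ≤ m, f i ≤ g i + h) :
    partialSups f m ≤ partialSups g m + h := by
  refine partialSups_le _ _ _ fun i hi => (hfg i hi).trans ?_
  exact add_le_add_left (le_partialSups_of_le _ hi) h

lemma my_le_of_forall_delta {a b K : ℝ} (hK : 0 ≤ K)
    (h : ∀ δ : ℝ, 0 < δ → δ ≤ 1 → a ≤ b + δ * K) : a ≤ b := by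
  refine le_of_forall_pos_le_add fun ε hε => ?_
  have hδ : 0 < min 1 (ε / (K + 1)) := lt_min one_pos (div_pos hε (by linarith))
  refine (h _ hδ (min_le_left _ _)).trans (add_le_add_right ?_ b)
  calc min 1 (ε / (K + 1)) * K ≤ (ε / (K + 1)) * (K + 1) := by
        apply mul_le_mul (min_le_right _ _) (by linarith) hK (le_of_lt (div_pos hε (by linarith)))
    _ = ε := by field_simp

end helpers

section L12
variable {X : Type*} [NormedAddCommGroup X] [Lattice X] [HasSolidNorm X] [IsOrderedAddMonoid X]
    [NormedSpace ℝ X]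

variable {X : Type*} [NormedAddCommGroup X] [Lattice X] [HasSolidNorm X] [IsOrderedAddMonoid X]
    [NormedSpace ℝ X]

/-- L1: coefficients of a finitely supported vector built along an injective index list. -/
lemma coeff_finsupport (e : ℕ → X) (c : X → ℕ → ℝ) (hbasic : IsBasicSeq e c)
    (r : ℕ) (l : ℕ → ℕ) (hl : ∀ i j, i < r → j < r → l i = l j → i = j) (t : ℕ → ℝ) :
    (∑ q ∈ Finset.range r, t q • e (l q)) ∈ closedSpan e ∧
    (∀ q < r, c (∑ q ∈ Finset.range r, t q • e (l q)) (l q) = t q) ∧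
    (∀ nn, (∀ q < r, l q ≠ nn) → c (∑ q ∈ Finset.range r, t q • e (l q)) nn = 0) := by
  set v := ∑ q ∈ Finset.range r, t q • e (l q) with hv
  have hvmem : v ∈ closedSpan e := by
    apply Submodule.le_topologicalClosure
    exact Submodule.sum_mem _ fun q _ => Submodule.smul_mem _ _
      (Submodule.subset_span (Set.mem_range_self _))
  set d : ℕ → ℝ := fun nn => ∑ q ∈ (Finset.range r).filter (fun q => l q = nn), t q with hd
  -- partial sums of d are eventually v
  have hevent : ∀ M, (∀ q < r, l q < M) →
      (∑ k ∈ Finset.range M, d k • e k) = v := by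
    intro M hM
    have : ∀ k ∈ Finset.range M, d k • e k
        = ∑ q ∈ (Finset.range r).filter (fun q => l q = k), t q • e (l q) := by
      intro k _
      rw [hd, Finset.sum_smul]
      refine Finset.sum_congr rfl fun q hq => ?_
      rw [(Finset.mem_filter.1 hq).2]
    rw [Finset.sum_congr rfl this, hv]
    refine Finset.sum_fiberwise_of_maps_to (fun q hq => ?_) (fun q => t q • e (l q))
    exact Finset.mem_range.2 (hM q (Finset.mem_range.1 hq))
  have htend : Tendsto (fun M => ∑ k ∈ Finset.range M, d k • e k) atTop (𝓝 v) := by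
    refine Tendsto.congr' ?_ tendsto_const_nhds
    have hBnd : ∃ M0, ∀ q < r, l q < M0 := by
      refine ⟨(Finset.range r).sup l + 1, fun q hq => ?_⟩
      exact Nat.lt_succ_of_le (Finset.le_sup (Finset.mem_range.2 hq))
    obtain ⟨M0, hM0⟩ := hBnd
    filter_upwards [eventually_ge_atTop M0] with M hM
    exact (hevent M fun q hq => lt_of_lt_of_le (hM0 q hq) hM).symm
  have hdc : d = c v := (hbasic.2 v hvmem).2 d htend
  refine ⟨hvmem, fun q hq => ?_, fun nn hnn => ?_⟩
  · rw [← hdc, hd]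
    refine Finset.sum_eq_single_of_mem q
      (Finset.mem_filter.2 ⟨Finset.mem_range.2 hq, rfl⟩) fun q' hq' hne => ?_
    exact absurd (hl q' q (Finset.mem_range.1 (Finset.mem_filter.1 hq').1) hq
      (Finset.mem_filter.1 hq').2) hne
  · rw [← hdc, hd]
    refine Finset.sum_eq_zero fun q hq => ?_
    exact absurd (Finset.mem_filter.1 hq).2 (hnn q (Finset.mem_range.1 (Finset.mem_filter.1 hq).1))

/-- L2: identification of the greedy ordering on a strictly-decreasing top block. -/
lemma rho_eq_of_strict (c : X → ℕ → ℝ) (v : X) (ρv : ℕ → ℕ)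
    (hgo : IsGreedyOrdering c v ρv) (r : ℕ) (hr : 0 < r) (l : ℕ → ℕ)
    (hdec : ∀ i j, i < j → j < r → |c v (l j)| < |c v (l i)|)
    (hoff : ∀ nn, (∀ q < r, l q ≠ nn) → |c v nn| < |c v (l (r - 1))|) :
    ∀ j < r, ρv j = l j := by
  obtain ⟨hinj, hrange, hmono⟩ := hgo
  have hlmin : ∀ j < r, |c v (l (r - 1))| ≤ |c v (l j)| := by
    intro j hj
    rcases lt_or_eq_of_le (Nat.le_sub_one_of_lt hj) with h | h
    · exact (hdec j (r - 1) h (Nat.sub_lt hr one_pos)).le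
    · rw [h]
  have hpos : 0 < |c v (l (r - 1))| := by
    set nn0 := (Finset.range r).sup l + 1 with hnn0
    have : ∀ q < r, l q ≠ nn0 := by
      intro q hq
      exact Nat.ne_of_lt (Nat.lt_succ_of_le (Finset.le_sup (Finset.mem_range.2 hq)))
    exact lt_of_le_of_lt (abs_nonneg _) (hoff nn0 this)
  intro j
  induction j using Nat.strong_induction_on with
  | _ j IH =>
    intro hj
    have hcl : c v (l j) ≠ 0 := by
      intro h0
      have := hlmin j hj
      rw [h0, abs_zero] at this
      exact absurd (lt_of_lt_of_le hpos this) (lt_irrefl 0)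
    obtain ⟨k, hk⟩ := hrange (l j) hcl
    have hkj : j ≤ k := by
      by_contra hlt
      push_neg at hlt
      have hIH := IH k hlt (lt_trans hlt hj)
      rw [hIH] at hk
      have := hdec k j hlt hj
      rw [hk] at this
      exact absurd this (lt_irrefl _)
    -- |c v (ρv j)| ≥ |c v (l j)| ≥ min > 0
    have h1 : |c v (l j)| ≤ |c v (ρv j)| := by
      have := hmono j k hkj
      rwa [hk] at this
    -- ρv j is in the list
    have h2 : ∃ s, s < r ∧ l s = ρv j := by
      by_contra hno
      push_neg at hno
      have := hoff (ρv j) fun q hq => hno q hq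
      exact absurd (lt_of_lt_of_le this (le_trans (hlmin j hj) h1)) (lt_irrefl _)
    obtain ⟨s, hs, hls⟩ := h2
    have hsj : j ≤ s := by
      by_contra hlt
      push_neg at hlt
      have hIH := IH s hlt (lt_trans hlt hj)
      rw [hls] at hIH
      exact absurd (hinj hIH) (Nat.ne_of_lt hlt)
    rcases lt_or_eq_of_le hsj with h | h
    · exfalso
      have hd := hdec j s h hs
      rw [hls] at hd
      exact absurd (lt_of_le_of_lt h1 hd) (lt_irrefl _)
    · rw [← h] at hls
      exact hls.symm


lemma finset_enum (P : Finset ℕ) : ∃ l : ℕ → ℕ, (∀ q < P.card, l q ∈ P) ∧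
    (∀ i j, i < P.card → j < P.card → l i = l j → i = j) ∧
    (∀ p ∈ P, ∃ q < P.card, l q = p) := by
  classical
  refine ⟨fun q => if h : q < P.card then ((P.equivFin.symm ⟨q, h⟩ : P) : ℕ) else 0, ?_, ?_, ?_⟩
  · intro q hq
    simp only [dif_pos hq]
    exact (P.equivFin.symm ⟨q, hq⟩).2
  · intro i j hi hj hij
    simp only [dif_pos hi, dif_pos hj] at hij
    have h2 := P.equivFin.symm.injective (Subtype.coe_injective hij)
    simpa using congrArg Fin.val h2
  · intro p hp
    refine ⟨P.equivFin ⟨p, hp⟩, (P.equivFin ⟨p, hp⟩).2, ?_⟩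
    simp only [dif_pos (P.equivFin ⟨p, hp⟩).2]
    simp

end L12

/-- Bound on the maximal function of an arbitrary ordered subset of the
support, for a uniformly quasi-greedy basic sequence.  The ordered set
`A = {n 0, …, n m}` plays the role of `{n_1, …, n_{m+1}}`. -/
theorem stmt8 {X : Type*} [NormedAddCommGroup X] [Lattice X] [HasSolidNorm X] [IsOrderedAddMonoid X]
    [NormedSpace ℝ X]
    [PosSMulStrictMono ℝ X] [PosSMulReflectLT ℝ X]
    [CompleteSpace X]
    (e : ℕ → X) (c : X → ℕ → ℝ) (ρ : X → ℕ → ℕ)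
    (hbasic : IsBasicSeq e c) (hsn : SemiNormalized e)
    (hρ : ∀ x ∈ closedSpan e, IsNaturalGreedyOrdering c x (ρ x))
    (Cu : ℝ) (hCu1 : 1 ≤ Cu)
    -- (e_n) is uniformly quasi-greedy with constant Cu = C_qg^∨
    (hCu : ∀ x ∈ closedSpan e, ∀ m, ‖greedyMax e c (ρ x) x m‖ ≤ Cu * ‖x‖)
    (Cqg : ℝ) (hCqg1 : 1 ≤ Cqg)
    -- with quasi-greedy constant Cqg
    (hCqg : ∀ x ∈ closedSpan e, ∀ m, ‖greedySum e c (ρ x) x m‖ ≤ Cqg * ‖x‖)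
    (x : X) (hx : x ∈ closedSpan e)
    (m : ℕ) (n : ℕ → ℕ) (hinj : ∀ i j, i ≤ m → j ≤ m → n i = n j → i = j)
    -- A ⊆ supp(x)
    (hsupp : ∀ i ≤ m, c x (n i) ≠ 0) :
    ‖partialSups (fun i => |∑ k ∈ Finset.range (i + 1), c x (n k) • e (n k)|) m‖ ≤
      8 * Cqg ^ 2 * Cu *
        (((Finset.range (m + 1)).sup' Finset.nonempty_range_add_one fun i => |c x (n i)|) /
          ((Finset.range (m + 1)).inf' Finset.nonempty_range_add_one fun i => |c x (n i)|)) *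
        ‖x‖ := by
  obtain ⟨b0, B, hb0, hsnb⟩ := hsn
  obtain ⟨⟨hρinj, hρrange, hρmono⟩, -⟩ := hρ x hx
  set a := (Finset.range (m + 1)).sup' Finset.nonempty_range_add_one fun i => |c x (n i)| with hadef
  set b := (Finset.range (m + 1)).inf' Finset.nonempty_range_add_one fun i => |c x (n i)| with hbdef
  have hb : 0 < b := by
    rw [hbdef, Finset.lt_inf'_iff]
    exact fun i hi => abs_pos.2 (hsupp i (Nat.lt_succ_iff.1 (Finset.mem_range.1 hi)))
  have hbA : ∀ k ≤ m, b ≤ |c x (n k)| := by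
    intro k hk
    rw [hbdef]
    exact Finset.inf'_le _ (Finset.mem_range.2 (Nat.lt_succ_of_le hk))
  have haA : ∀ k ≤ m, |c x (n k)| ≤ a := by
    intro k hk
    rw [hadef]
    exact Finset.le_sup' (fun i => |c x (n i)|) (Finset.mem_range.2 (Nat.lt_succ_of_le hk))
  have hab : b ≤ a := (hbA 0 (Nat.zero_le m)).trans (haA 0 (Nat.zero_le m))
  have ha : 0 < a := lt_of_lt_of_le hb hab
  -- terms tend to zero
  have hterm : Tendsto (fun k => c x k • e k) atTop (𝓝 0) := by
    have h1 := (hbasic.2 x hx).1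
    have h2 := (h1.comp (tendsto_add_atTop_nat 1)).sub h1
    rw [sub_self] at h2
    refine h2.congr fun M => ?_
    simp [Finset.sum_range_succ]
  -- the threshold index N
  have hNex : ∃ j, |c x (ρ x j)| < b := by
    by_contra hno
    push_neg at hno
    have hρtend : Tendsto (ρ x) atTop atTop := by
      rw [← Nat.cofinite_eq_atTop]; exact hρinj.tendsto_cofinite
    have h3 : Tendsto (fun j => ‖c x (ρ x j) • e (ρ x j)‖) atTop (𝓝 0) := by
      simpa using ((hterm.comp hρtend).norm)
    have h4 := (h3.eventually (eventually_lt_nhds (mul_pos hb hb0))).exists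
    obtain ⟨j, hj⟩ := h4
    have : b * b0 ≤ ‖c x (ρ x j) • e (ρ x j)‖ := by
      rw [norm_smul, Real.norm_eq_abs]
      exact mul_le_mul (hno j) (hsnb (ρ x j)).1 hb0.le (abs_nonneg _)
    linarith
  set N := Nat.find hNex with hNdef
  have hN2 : |c x (ρ x N)| < b := Nat.find_spec hNex
  have hN1 : ∀ j < N, b ≤ |c x (ρ x j)| := fun j hj => le_of_not_gt (Nat.find_min hNex hj)
  have hjdx : ∀ k ≤ m, ∃ j < N, ρ x j = n k := by
    intro k hk
    obtain ⟨j, hj⟩ := hρrange (n k) (hsupp k hk)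
    refine ⟨j, ?_, hj⟩
    by_contra hge
    push_neg at hge
    have := hρmono N j hge
    rw [hj] at this
    exact absurd (lt_of_le_of_lt this hN2) (not_lt.2 (hbA k hk))
  have hN0 : 0 < N := by
    obtain ⟨j, hj, -⟩ := hjdx 0 (Nat.zero_le m)
    exact Nat.pos_of_ne_zero fun h => by simp [h] at hj
  -- the flattened vector u
  set tu : ℕ → ℝ := fun j => |c x (ρ x j)|⁻¹ * c x (ρ x j) with htu
  set u : X := ∑ q ∈ Finset.range N, tu q • e (ρ x q) with hu
  obtain ⟨humem, hucoeff, huoff⟩ := coeff_finsupport e c hbasic N (ρ x)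
    (fun i j _ _ h => hρinj h) tu
  have htu_abs : ∀ j < N, |tu j| = 1 := by
    intro j hj
    have hcne : |c x (ρ x j)| ≠ 0 := ne_of_gt (lt_of_lt_of_le hb (hN1 j hj))
    rw [htu]
    simp only [abs_mul, abs_inv, abs_abs]
    exact inv_mul_cancel₀ hcne
  have hu_norm : ‖u‖ ≤ 2 / b * (Cqg * ‖x‖) := by
    set f : ℕ → ℝ := fun j => |c x (ρ x j)|⁻¹ with hf
    set g : ℕ → X := fun j => c x (ρ x j) • e (ρ x j) with hg
    have hG : ∀ M, (∑ i ∈ Finset.range M, g i) = greedySum e c (ρ x) x M := fun M => rfl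
    have hGn : ∀ M, ‖∑ i ∈ Finset.range M, g i‖ ≤ Cqg * ‖x‖ := by
      intro M; rw [hG]; exact hCqg x hx M
    have hrepr : u = ∑ j ∈ Finset.range N, f j • g j := by
      rw [hu]
      exact Finset.sum_congr rfl fun j _ => (smul_smul (f j) (c x (ρ x j)) (e (ρ x j))).symm
    rw [hrepr, Finset.sum_range_by_parts f g N]
    have hfmono : ∀ i, i + 1 < N → f i ≤ f (i + 1) := by
      intro i hi
      have h1 : b ≤ |c x (ρ x (i + 1))| := hN1 _ hi
      have h2 : |c x (ρ x (i + 1))| ≤ |c x (ρ x i)| := hρmono i (i + 1) (Nat.le_succ i)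
      exact inv_anti₀ (lt_of_lt_of_le hb h1) h2
    have hfnn : ∀ i, 0 ≤ f i := fun i => by rw [hf]; positivity
    have hfb : f (N - 1) ≤ 1 / b := by
      rw [hf, one_div]
      exact inv_anti₀ hb (hN1 _ (Nat.sub_lt hN0 one_pos))
    have hxq : 0 ≤ Cqg * ‖x‖ := mul_nonneg (by linarith) (norm_nonneg x)
    calc ‖f (N - 1) • (∑ i ∈ Finset.range N, g i) -
          ∑ i ∈ Finset.range (N - 1), (f (i + 1) - f i) • (∑ j ∈ Finset.range (i + 1), g j)‖
        ≤ ‖f (N - 1) • (∑ i ∈ Finset.range N, g i)‖ +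
          ‖∑ i ∈ Finset.range (N - 1), (f (i + 1) - f i) • (∑ j ∈ Finset.range (i + 1), g j)‖ :=
          norm_sub_le _ _
      _ ≤ f (N - 1) * (Cqg * ‖x‖) +
          ∑ i ∈ Finset.range (N - 1), (f (i + 1) - f i) * (Cqg * ‖x‖) := by
          apply add_le_add
          · rw [norm_smul, Real.norm_eq_abs, abs_of_nonneg (hfnn _)]
            exact mul_le_mul_of_nonneg_left (hGn N) (hfnn _)
          · refine (norm_sum_le _ _).trans (Finset.sum_le_sum fun i hi => ?_)
            have hmem := Finset.mem_range.1 hi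
            have hfm := hfmono i (by omega)
            rw [norm_smul, Real.norm_eq_abs, abs_of_nonneg (by linarith)]
            exact mul_le_mul_of_nonneg_left (hGn (i + 1)) (by linarith)
      _ = (f (N - 1) + (f (N - 1) - f 0)) * (Cqg * ‖x‖) := by
          rw [← Finset.sum_mul, Finset.sum_range_sub f (N - 1)]
          ring
      _ ≤ 2 / b * (Cqg * ‖x‖) := by
          apply mul_le_mul_of_nonneg_right _ hxq
          have := hfnn 0
          have h1b : (0:ℝ) < 1 / b := by positivity
          calc f (N - 1) + (f (N - 1) - f 0) ≤ 2 * f (N - 1) := by linarith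
            _ ≤ 2 * (1 / b) := by linarith
            _ = 2 / b := by ring
  -- arbitrary-subset natural-sign bound
  -- total choice function for indices of A inside the top block
  have hjdx' : ∀ k, ∃ j, k ≤ m → j < N ∧ ρ x j = n k := by
    intro k
    by_cases hk : k ≤ m
    · obtain ⟨j, hj1, hj2⟩ := hjdx k hk
      exact ⟨j, fun _ => ⟨hj1, hj2⟩⟩
    · exact ⟨0, fun h => absurd h hk⟩
  choose jdxF hjdxF using hjdx'
  have hLplus : ∀ P : Finset ℕ, P ⊆ Finset.range (m + 1) →
      ‖∑ k ∈ P, c u (n k) • e (n k)‖ ≤ Cqg * ‖u‖ := by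
    intro P hP
    have hCqgu : 0 ≤ Cqg * ‖u‖ := mul_nonneg (by linarith) (norm_nonneg u)
    rcases Nat.eq_zero_or_pos P.card with hr0 | hr0
    · rw [Finset.card_eq_zero.1 hr0, Finset.sum_empty, norm_zero]
      exact hCqgu
    obtain ⟨l, hlP, hlinj, hlsurj⟩ := finset_enum P
    have hlm : ∀ q < P.card, l q ≤ m :=
      fun q hq => Nat.lt_succ_iff.1 (Finset.mem_range.1 (hP (hlP q hq)))
    have hsum : ∀ F : ℕ → X, ∑ p ∈ P, F p = ∑ q ∈ Finset.range P.card, F (l q) := by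
      intro F
      refine (Finset.sum_bij (fun q hq => l q) ?_ ?_ ?_ ?_).symm
      · exact fun q hq => hlP q (Finset.mem_range.1 hq)
      · exact fun q1 h1 q2 h2 h =>
          hlinj q1 q2 (Finset.mem_range.1 h1) (Finset.mem_range.1 h2) h
      · intro p hp
        obtain ⟨q, hq, hlq⟩ := hlsurj p hp
        exact ⟨q, Finset.mem_range.2 hq, hlq⟩
      · exact fun q hq => rfl
    set pert : ℕ → ℝ :=
      fun j => ∑ q ∈ (Finset.range P.card).filter (fun q => n (l q) = ρ x j),
        ((P.card : ℝ) - q) with hpert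
    have hpertnn : ∀ j, 0 ≤ pert j := by
      intro j
      refine Finset.sum_nonneg fun q hq => ?_
      have := Finset.mem_range.1 (Finset.mem_filter.1 hq).1
      have : (q : ℝ) ≤ (P.card : ℝ) := Nat.cast_le.2 this.le
      linarith
    have hjq : ∀ q < P.card, jdxF (l q) < N ∧ ρ x (jdxF (l q)) = n (l q) :=
      fun q hq => hjdxF (l q) (hlm q hq)
    have hpert_at : ∀ q < P.card, pert (jdxF (l q)) = (P.card : ℝ) - q := by
      intro q hq
      rw [hpert]
      refine Finset.sum_eq_single_of_mem q (Finset.mem_filter.2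
        ⟨Finset.mem_range.2 hq, (hjq q hq).2.symm⟩) fun q' hq' hne => ?_
      exfalso
      obtain ⟨hq'r, hq'e⟩ := Finset.mem_filter.1 hq'
      have hq'r := Finset.mem_range.1 hq'r
      rw [(hjq q hq).2] at hq'e
      exact hne (hlinj q' q hq'r hq (hinj _ _ (hlm q' hq'r) (hlm q hq) hq'e))
    have hpert_off : ∀ j, (∀ q < P.card, n (l q) ≠ ρ x j) → pert j = 0 := by
      intro j hj
      rw [hpert]
      refine Finset.sum_eq_zero fun q hq => ?_
      obtain ⟨hqr, hqe⟩ := Finset.mem_filter.1 hq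
      exact absurd hqe (hj q (Finset.mem_range.1 hqr))
    set C1 : ℝ := ∑ j ∈ Finset.range N, pert j * ‖e (ρ x j)‖ with hC1
    set C2 : ℝ := ∑ q ∈ Finset.range P.card, ((P.card : ℝ) - q) * ‖e (n (l q))‖ with hC2
    have hC1nn : 0 ≤ C1 := Finset.sum_nonneg fun j _ =>
      mul_nonneg (hpertnn j) (norm_nonneg _)
    have hC2nn : 0 ≤ C2 := Finset.sum_nonneg fun q hq => by
      have h1 : (q : ℝ) ≤ (P.card : ℝ) := Nat.cast_le.2 (Finset.mem_range.1 hq).le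
      exact mul_nonneg (by linarith) (norm_nonneg _)
    refine my_le_of_forall_delta (K := Cqg * C1 + C2)
      (by positivity) fun δ hδ0 hδ1 => ?_
    -- the perturbed vector w
    set tw : ℕ → ℝ := fun j => tu j * (1 + δ * pert j) with htw
    set w : X := ∑ q ∈ Finset.range N, tw q • e (ρ x q) with hw
    obtain ⟨hwmem, hwc, hwoff⟩ := coeff_finsupport e c hbasic N (ρ x)
      (fun i j _ _ h => hρinj h) tw
    have habsw : ∀ j < N, |c w (ρ x j)| = 1 + δ * pert j := by
      intro j hj
      rw [hwc j hj]
      simp only [htw]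
      rw [abs_mul, htu_abs j hj, one_mul, abs_of_pos (by nlinarith [hpertnn j])]
    have hcwA : ∀ q < P.card, c w (n (l q)) = tu (jdxF (l q)) * (1 + δ * ((P.card : ℝ) - q)) := by
      intro q hq
      rw [← (hjq q hq).2, hwc _ (hjq q hq).1]
      simp only [htw]
      rw [hpert_at q hq]
    have habswA : ∀ q < P.card, |c w (n (l q))| = 1 + δ * ((P.card : ℝ) - q) := by
      intro q hq
      rw [← (hjq q hq).2, ← hpert_at q hq, habsw _ (hjq q hq).1]
    -- identify the greedy ordering of w
    have hρw : ∀ q < P.card, ρ w q = n (l q) := by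
      refine rho_eq_of_strict c w (ρ w) (hρ w hwmem).1 P.card hr0 (fun q => n (l q)) ?_ ?_
      · intro i j hij hj
        rw [habswA i (hij.trans hj), habswA j hj]
        have h1 : (j : ℝ) < (P.card : ℝ) := Nat.cast_lt.2 hj
        have h2 : (i : ℝ) < (j : ℝ) := Nat.cast_lt.2 hij
        nlinarith
      · intro nn hnn
        have hmax : |c w (n (l (P.card - 1)))| = 1 + δ * ((P.card : ℝ) - (P.card - 1 : ℕ)) :=
          habswA _ (Nat.sub_lt hr0 one_pos)
        have hcast : ((P.card - 1 : ℕ) : ℝ) = (P.card : ℝ) - 1 := by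
          rw [Nat.cast_sub hr0]
          simp
        rw [hmax, hcast]
        have : (P.card : ℝ) - ((P.card : ℝ) - 1) = 1 := by ring
        rw [this, mul_one]
        by_cases hex : ∃ j < N, ρ x j = nn
        · obtain ⟨j, hjN, hje⟩ := hex
          have hp0 : pert j = 0 := hpert_off j fun q hq hne => hnn q hq (hne.trans hje)
          rw [← hje, habsw j hjN, hp0, mul_zero, add_zero]
          linarith
        · push_neg at hex
          rw [hwoff nn fun q hq hne => (hex q hq) hne, abs_zero]
          linarith
    -- the greedy sum of w at stage P.card
    have hgs : greedySum e c (ρ w) w P.card =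
        ∑ q ∈ Finset.range P.card,
          (tu (jdxF (l q)) * (1 + δ * ((P.card : ℝ) - q))) • e (n (l q)) := by
      refine Finset.sum_congr rfl fun q hq => ?_
      have hq := Finset.mem_range.1 hq
      rw [hρw q hq, hcwA q hq]
    have hgsn : ‖greedySum e c (ρ w) w P.card‖ ≤ Cqg * ‖w‖ := hCqg w hwmem P.card
    -- ‖w‖ ≤ ‖u‖ + δ * C1
    have hwu : ‖w - u‖ ≤ δ * C1 := by
      have : w - u = ∑ j ∈ Finset.range N, ((tu j * (δ * pert j)) • e (ρ x j)) := by
        rw [hw, hu, ← Finset.sum_sub_distrib]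
        refine Finset.sum_congr rfl fun j _ => ?_
        rw [← sub_smul, htw]
        ring_nf
      rw [this]
      refine (norm_sum_le _ _).trans ?_
      rw [hC1, Finset.mul_sum]
      refine Finset.sum_le_sum fun j hj => ?_
      rw [norm_smul, Real.norm_eq_abs, abs_mul, htu_abs j (Finset.mem_range.1 hj), one_mul,
        abs_mul, abs_of_pos hδ0, abs_of_nonneg (hpertnn j)]
      exact le_of_eq (by ring)
    have hwn : ‖w‖ ≤ ‖u‖ + δ * C1 := by
      calc ‖w‖ = ‖u + (w - u)‖ := by rw [show u + (w - u) = w by abel]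
        _ ≤ ‖u‖ + ‖w - u‖ := norm_add_le _ _
        _ ≤ ‖u‖ + δ * C1 := by linarith
    -- the target sum and its distance to the greedy sum
    have hTgt : ∑ k ∈ P, c u (n k) • e (n k) =
        ∑ q ∈ Finset.range P.card, tu (jdxF (l q)) • e (n (l q)) := by
      rw [hsum fun k => c u (n k) • e (n k)]
      refine Finset.sum_congr rfl fun q hq => ?_
      have hq := Finset.mem_range.1 hq
      rw [← (hjq q hq).2, hucoeff _ (hjq q hq).1]
    have hdiff : ‖(∑ k ∈ P, c u (n k) • e (n k)) - greedySum e c (ρ w) w P.card‖ ≤ δ * C2 := by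
      rw [hTgt, hgs, ← Finset.sum_sub_distrib]
      have heq : ∀ q ∈ Finset.range P.card,
          tu (jdxF (l q)) • e (n (l q)) -
            (tu (jdxF (l q)) * (1 + δ * ((P.card : ℝ) - q))) • e (n (l q)) =
          (-(tu (jdxF (l q)) * (δ * ((P.card : ℝ) - q)))) • e (n (l q)) := by
        intro q hq
        rw [← sub_smul]
        congr 1
        ring
      rw [Finset.sum_congr rfl heq]
      refine (norm_sum_le _ _).trans ?_
      rw [hC2, Finset.mul_sum]
      refine Finset.sum_le_sum fun q hq => ?_
      have hqlt := Finset.mem_range.1 hq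
      have hcast : (q : ℝ) ≤ (P.card : ℝ) := Nat.cast_le.2 hqlt.le
      rw [norm_smul, Real.norm_eq_abs, abs_neg, abs_mul, htu_abs _ (hjq q hqlt).1, one_mul,
        abs_mul, abs_of_pos hδ0, abs_of_nonneg (by linarith)]
      exact le_of_eq (by ring)
    calc ‖∑ k ∈ P, c u (n k) • e (n k)‖
        ≤ ‖greedySum e c (ρ w) w P.card‖ +
          ‖(∑ k ∈ P, c u (n k) • e (n k)) - greedySum e c (ρ w) w P.card‖ := by
          have := norm_add_le (greedySum e c (ρ w) w P.card)
            ((∑ k ∈ P, c u (n k) • e (n k)) - greedySum e c (ρ w) w P.card)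
          simpa using this
      _ ≤ Cqg * (‖u‖ + δ * C1) + δ * C2 := by
          have := hgsn.trans (mul_le_mul_of_nonneg_left hwn (by linarith : (0:ℝ) ≤ Cqg))
          linarith
      _ = Cqg * ‖u‖ + δ * (Cqg * C1 + C2) := by ring
  -- arbitrary sign patterns
  have hcuA : ∀ k ≤ m, |c u (n k)| = 1 := by
    intro k hk
    obtain ⟨hj1, hj2⟩ := hjdxF k hk
    rw [← hj2, hucoeff _ hj1]
    exact htu_abs _ hj1
  have hLsigns : ∀ s : ℕ → ℝ, (∀ k ≤ m, s k = 1 ∨ s k = -1) →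
      ‖∑ k ∈ Finset.range (m + 1), s k • e (n k)‖ ≤ 2 * Cqg * ‖u‖ := by
    intro s hs
    classical
    set Pp := (Finset.range (m + 1)).filter (fun k => s k = c u (n k)) with hPp
    set Pn := (Finset.range (m + 1)).filter (fun k => ¬ s k = c u (n k)) with hPn
    have hsplit := Finset.sum_filter_add_sum_filter_not (Finset.range (m + 1))
      (fun k => s k = c u (n k)) (fun k => s k • e (n k))
    have h1 : ∑ k ∈ Pp, s k • e (n k) = ∑ k ∈ Pp, c u (n k) • e (n k) :=
      Finset.sum_congr rfl fun k hk => by rw [(Finset.mem_filter.1 hk).2]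
    have h2 : ∑ k ∈ Pn, s k • e (n k) = -∑ k ∈ Pn, c u (n k) • e (n k) := by
      rw [← Finset.sum_neg_distrib]
      refine Finset.sum_congr rfl fun k hk => ?_
      obtain ⟨hkr, hkne⟩ := Finset.mem_filter.1 hk
      have hkm : k ≤ m := Nat.lt_succ_iff.1 (Finset.mem_range.1 hkr)
      have hcu1 : c u (n k) = 1 ∨ c u (n k) = -1 :=
        (abs_eq (by norm_num : (0:ℝ) ≤ 1)).1 (hcuA k hkm)
      have hsneg : s k = -c u (n k) := by
        rcases hs k hkm with h | h <;> rcases hcu1 with h' | h' <;>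
          rw [h, h'] at hkne ⊢ <;> first | exact absurd rfl hkne | norm_num
      rw [hsneg, neg_smul]
    have htotal : ∑ k ∈ Finset.range (m + 1), s k • e (n k) =
        (∑ k ∈ Pp, c u (n k) • e (n k)) - ∑ k ∈ Pn, c u (n k) • e (n k) := by
      rw [← hsplit, h1, h2, sub_eq_add_neg]
    rw [htotal]
    have hb1 := hLplus Pp (Finset.filter_subset _ _)
    have hb2 := hLplus Pn (Finset.filter_subset _ _)
    calc ‖(∑ k ∈ Pp, c u (n k) • e (n k)) - ∑ k ∈ Pn, c u (n k) • e (n k)‖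
        ≤ ‖∑ k ∈ Pp, c u (n k) • e (n k)‖ + ‖∑ k ∈ Pn, c u (n k) • e (n k)‖ := norm_sub_le _ _
      _ ≤ 2 * Cqg * ‖u‖ := by linarith
  -- the lattice-maximal bound for scaled sign patterns
  have hCu0 : (0:ℝ) ≤ Cu := by linarith
  have hVsign : ∀ μ : ℝ, 0 < μ → ∀ s : ℕ → ℝ, (∀ k ≤ m, s k = 1 ∨ s k = -1) →
      ‖partialSups (fun i => |∑ k ∈ Finset.range (i + 1), (μ * s k) • e (n k)|) m‖ ≤
        Cu * ‖∑ k ∈ Finset.range (m + 1), (μ * s k) • e (n k)‖ := by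
    intro μ hμ s hs
    have hsabs : ∀ k ≤ m, |s k| = 1 := fun k hk => by
      rcases hs k hk with h | h <;> rw [h] <;> norm_num
    set T : X := ∑ k ∈ Finset.range (m + 1), (μ * s k) • e (n k) with hT
    set W : X := ∑ k ∈ Finset.range (m + 1), (μ * s k * ((m - k : ℕ) : ℝ)) • e (n k) with hW
    set E : X := ∑ k ∈ Finset.range (m + 1), |(μ * ((m - k : ℕ) : ℝ)) • e (n k)| with hE
    have hEnn : 0 ≤ E := Finset.sum_nonneg fun k _ => abs_nonneg _
    refine my_le_of_forall_delta (K := Cu * ‖W‖ + ‖E‖)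
      (add_nonneg (mul_nonneg hCu0 (norm_nonneg _)) (norm_nonneg _)) fun δ hδ0 hδ1 => ?_
    set tz : ℕ → ℝ := fun k => μ * s k * (1 + δ * ((m - k : ℕ) : ℝ)) with htz
    set z : X := ∑ q ∈ Finset.range (m + 1), tz q • e (n q) with hz
    obtain ⟨hzmem, hzc, hzoff⟩ := coeff_finsupport e c hbasic (m + 1) n
      (fun i j hi hj h => hinj i j (Nat.lt_succ_iff.1 hi) (Nat.lt_succ_iff.1 hj) h) tz
    have habsz : ∀ k < m + 1, |c z (n k)| = μ * (1 + δ * ((m - k : ℕ) : ℝ)) := by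
      intro k hk
      have hk' := Nat.lt_succ_iff.1 hk
      have h1 : (0:ℝ) ≤ ((m - k : ℕ) : ℝ) := Nat.cast_nonneg _
      rw [hzc k hk]
      simp only [htz]
      rw [abs_mul, abs_mul, hsabs k hk', abs_of_pos hμ, mul_one, abs_of_pos (by nlinarith)]
    have hρz : ∀ k < m + 1, ρ z k = n k := by
      refine rho_eq_of_strict c z (ρ z) (hρ z hzmem).1 (m + 1) (Nat.succ_pos m) n ?_ ?_
      · intro i j hij hj
        rw [habsz i (hij.trans hj), habsz j hj]
        have hj' := Nat.lt_succ_iff.1 hj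
        have hlt : (m - j : ℕ) < (m - i : ℕ) :=
          Nat.sub_lt_sub_left (lt_of_lt_of_le hij hj') hij
        have hltR : ((m - j : ℕ) : ℝ) < ((m - i : ℕ) : ℝ) := Nat.cast_lt.2 hlt
        nlinarith [mul_pos (mul_pos hμ hδ0) (sub_pos.2 hltR)]
      · intro nn hnn
        have hm1 : m + 1 - 1 = m := rfl
        rw [hm1, habsz m (Nat.lt_succ_self m)]
        have h0 : ((m - m : ℕ) : ℝ) = 0 := by simp
        rw [h0, mul_zero, add_zero, mul_one, hzoff nn hnn, abs_zero]
        exact hμ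
    have hgsz : ∀ i ≤ m, greedySum e c (ρ z) z (i + 1) =
        ∑ k ∈ Finset.range (i + 1), tz k • e (n k) := by
      intro i hi
      refine Finset.sum_congr rfl fun k hk => ?_
      have hk' : k < m + 1 := lt_of_lt_of_le (Finset.mem_range.1 hk) (Nat.succ_le_succ hi)
      rw [hρz k hk', hzc k hk']
    have hzsplit : ∀ i, ∑ k ∈ Finset.range (i + 1), tz k • e (n k)
        = (∑ k ∈ Finset.range (i + 1), (μ * s k) • e (n k)) +
          δ • (∑ k ∈ Finset.range (i + 1), (μ * s k * ((m - k : ℕ) : ℝ)) • e (n k)) := by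
      intro i
      rw [Finset.smul_sum, ← Finset.sum_add_distrib]
      refine Finset.sum_congr rfl fun k hk => ?_
      rw [smul_smul, ← add_smul]
      congr 1
      simp only [htz]
      ring
    have hterm_eq : ∀ k ≤ m,
        |(μ * s k * ((m - k : ℕ) : ℝ)) • e (n k)| = |(μ * ((m - k : ℕ) : ℝ)) • e (n k)| := by
      intro k hk
      rw [my_abs_smul, my_abs_smul]
      congr 1
      simp [abs_mul, hsabs k hk]
    have hWi : ∀ i ≤ m,
        |∑ k ∈ Finset.range (i + 1), (μ * s k * ((m - k : ℕ) : ℝ)) • e (n k)| ≤ E := by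
      intro i hi
      refine le_trans (Finset.le_sum_of_subadditive _ abs_zero.le abs_add_le _ _) ?_
      have heq : ∀ k ∈ Finset.range (i + 1),
          |(μ * s k * ((m - k : ℕ) : ℝ)) • e (n k)| = |(μ * ((m - k : ℕ) : ℝ)) • e (n k)| :=
        fun k hk => hterm_eq k (le_trans (Nat.lt_succ_iff.1 (Finset.mem_range.1 hk)) hi)
      rw [Finset.sum_congr rfl heq, hE]
      exact Finset.sum_le_sum_of_subset_of_nonneg
        (Finset.range_subset_range.2 (Nat.succ_le_succ hi)) (fun k _ _ => abs_nonneg _)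
    have hpoint : ∀ i ≤ m, |∑ k ∈ Finset.range (i + 1), (μ * s k) • e (n k)| ≤
        |greedySum e c (ρ z) z (i + 1)| + δ • E := by
      intro i hi
      set B : X := ∑ k ∈ Finset.range (i + 1), (μ * s k * ((m - k : ℕ) : ℝ)) • e (n k) with hB
      have h1 : ∑ k ∈ Finset.range (i + 1), (μ * s k) • e (n k) =
          greedySum e c (ρ z) z (i + 1) - δ • B := by
        rw [hgsz i hi, hzsplit i]
        abel
      rw [h1, sub_eq_add_neg]
      refine le_trans (abs_add_le _ _) ?_
      rw [abs_neg]
      refine add_le_add_right ?_ _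
      rw [my_abs_smul, abs_of_pos hδ0]
      exact smul_le_smul_of_nonneg_left (hWi i hi) hδ0.le
    have hPS : partialSups (fun i => |∑ k ∈ Finset.range (i + 1), (μ * s k) • e (n k)|) m ≤
        greedyMax e c (ρ z) z m + δ • E := by
      have hGM : greedyMax e c (ρ z) z m =
          partialSups (fun i => |greedySum e c (ρ z) z (i + 1)|) m := rfl
      rw [hGM]
      exact my_partialSups_add_le _ _ _ m fun i hi => hpoint i hi
    have hn1 : ‖partialSups (fun i => |∑ k ∈ Finset.range (i + 1), (μ * s k) • e (n k)|) m‖ ≤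
        ‖greedyMax e c (ρ z) z m + δ • E‖ :=
      my_norm_mono (my_partialSups_nonneg _ m) hPS
    have hn2 : ‖greedyMax e c (ρ z) z m + δ • E‖ ≤ Cu * ‖z‖ + δ * ‖E‖ := by
      refine (norm_add_le _ _).trans ?_
      have h3 := hCu z hzmem m
      rw [norm_smul, Real.norm_eq_abs, abs_of_pos hδ0]
      linarith
    have hzn : ‖z‖ ≤ ‖T‖ + δ * ‖W‖ := by
      have hzTW : z = T + δ • W := by
        rw [hz, hT, hW]
        exact hzsplit m
      rw [hzTW]
      refine (norm_add_le _ _).trans ?_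
      rw [norm_smul, Real.norm_eq_abs, abs_of_pos hδ0]
    have h5 : Cu * ‖z‖ ≤ Cu * (‖T‖ + δ * ‖W‖) := mul_le_mul_of_nonneg_left hzn hCu0
    calc ‖partialSups (fun i => |∑ k ∈ Finset.range (i + 1), (μ * s k) • e (n k)|) m‖
        ≤ Cu * ‖z‖ + δ * ‖E‖ := le_trans hn1 hn2
      _ ≤ Cu * ‖T‖ + δ * (Cu * ‖W‖ + ‖E‖) := by nlinarith
      _ = Cu * ‖T‖ + δ * (Cu * ‖W‖ + ‖E‖) := rfl
  set C0 : ℝ := Cu * (a * (2 * Cqg * ‖u‖)) with hC0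
  have hC0nn : 0 ≤ C0 := by
    have h1 : (0:ℝ) ≤ Cu := by linarith
    have h2 : (0:ℝ) ≤ Cqg := by linarith
    positivity
  -- extreme-point bound
  have hmaster : ∀ t : ℕ → ℝ, (∀ k ≤ m, t k = a ∨ t k = -a) →
      ‖partialSups (fun i => |∑ k ∈ Finset.range (i + 1), t k • e (n k)|) m‖ ≤ C0 := by
    intro t ht
    set s : ℕ → ℝ := fun k => t k / a with hs
    have hts : ∀ k, t k = a * s k := fun k => by
      rw [hs]
      field_simp
    have hsgn : ∀ k ≤ m, s k = 1 ∨ s k = -1 := by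
      intro k hk
      rcases ht k hk with h | h
      · left; rw [hs]; simp only []; rw [h]; field_simp
      · right; rw [hs]; simp only []; rw [h]; field_simp
    have hPV : (fun i => |∑ k ∈ Finset.range (i + 1), t k • e (n k)|)
        = fun i => |∑ k ∈ Finset.range (i + 1), (a * s k) • e (n k)| := by
      funext i
      congr 1
      exact Finset.sum_congr rfl fun k _ => by rw [← hts k]
    rw [hPV]
    refine (hVsign a ha s hsgn).trans ?_
    have hfac : ∑ k ∈ Finset.range (m + 1), (a * s k) • e (n k) =
        a • ∑ k ∈ Finset.range (m + 1), s k • e (n k) := by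
      rw [Finset.smul_sum]
      exact Finset.sum_congr rfl fun k _ => (smul_smul a (s k) _).symm
    rw [hC0, hfac, norm_smul, Real.norm_eq_abs, abs_of_pos ha]
    exact mul_le_mul_of_nonneg_left
      (mul_le_mul_of_nonneg_left (hLsigns s hsgn) ha.le) hCu0
  -- convexity induction
  have hmaster' : ∀ t : ℕ → ℝ,
      ((Finset.range (m + 1)).filter (fun k => t k ≠ a ∧ t k ≠ -a)) = ∅ →
      ‖partialSups (fun i => |∑ k ∈ Finset.range (i + 1), t k • e (n k)|) m‖ ≤ C0 := by
    intro t hemp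
    refine hmaster t fun k hk => ?_
    by_contra hne
    push_neg at hne
    have hmem : k ∈ (Finset.range (m + 1)).filter (fun k => t k ≠ a ∧ t k ≠ -a) :=
      Finset.mem_filter.2 ⟨Finset.mem_range.2 (Nat.lt_succ_of_le hk), hne⟩
    rw [hemp] at hmem
    exact absurd hmem (Finset.notMem_empty k)
  have hconv : ∀ (r : ℕ) (t : ℕ → ℝ),
      ((Finset.range (m + 1)).filter (fun k => t k ≠ a ∧ t k ≠ -a)).card ≤ r →
      (∀ k ≤ m, |t k| ≤ a) →
      ‖partialSups (fun i => |∑ k ∈ Finset.range (i + 1), t k • e (n k)|) m‖ ≤ C0 := by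
    intro r
    induction r with
    | zero =>
      intro t hcard hbox
      exact hmaster' t (Finset.card_eq_zero.1 (Nat.le_zero.1 hcard))
    | succ r IH =>
      intro t hcard hbox
      by_cases hemp : ((Finset.range (m + 1)).filter (fun k => t k ≠ a ∧ t k ≠ -a)) = ∅
      · exact hmaster' t hemp
      obtain ⟨k0, hk0⟩ := Finset.nonempty_iff_ne_empty.2 hemp
      obtain ⟨hk0r, hk0c⟩ := Finset.mem_filter.1 hk0
      have hk0m : k0 ≤ m := Nat.lt_succ_iff.1 (Finset.mem_range.1 hk0r)
      have habs0 := abs_le.1 (hbox k0 hk0m)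
      set lam : ℝ := (a + t k0) / (2 * a) with hlam
      have hlam0 : 0 ≤ lam := by
        rw [hlam]
        apply div_nonneg <;> linarith [habs0.1]
      have hlam1 : lam ≤ 1 := by
        rw [hlam, div_le_one (by linarith)]
        linarith [habs0.2]
      set tp : ℕ → ℝ := Function.update t k0 a with htp
      set tm : ℕ → ℝ := Function.update t k0 (-a) with htm
      have hcomb : ∀ k, t k • e (n k) = lam • (tp k • e (n k)) + (1 - lam) • (tm k • e (n k)) := by
        intro k
        rw [smul_smul, smul_smul, ← add_smul]
        congr 1
        by_cases hk : k = k0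
        · subst hk
          rw [htp, htm, Function.update_self, Function.update_self, hlam]
          field_simp
          ring
        · rw [htp, htm, Function.update_of_ne hk, Function.update_of_ne hk]
          ring
      set PSp : X := partialSups (fun i => |∑ k ∈ Finset.range (i + 1), tp k • e (n k)|) m
        with hPSp
      set PSm : X := partialSups (fun i => |∑ k ∈ Finset.range (i + 1), tm k • e (n k)|) m
        with hPSm
      have habs_i : ∀ i ≤ m, |∑ k ∈ Finset.range (i + 1), t k • e (n k)| ≤
          lam • PSp + (1 - lam) • PSm := by
        intro i hi
        have hSi : ∑ k ∈ Finset.range (i + 1), t k • e (n k)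
            = lam • (∑ k ∈ Finset.range (i + 1), tp k • e (n k)) +
              (1 - lam) • (∑ k ∈ Finset.range (i + 1), tm k • e (n k)) := by
          rw [Finset.smul_sum, Finset.smul_sum, ← Finset.sum_add_distrib]
          exact Finset.sum_congr rfl fun k _ => hcomb k
        rw [hSi]
        refine (my_conv_abs lam (1 - lam) hlam0 (by linarith) _ _).trans ?_
        refine add_le_add
          (smul_le_smul_of_nonneg_left ?_ hlam0)
          (smul_le_smul_of_nonneg_left ?_ (by linarith : (0:ℝ) ≤ 1 - lam))
        · exact le_partialSups_of_le (fun i => |∑ k ∈ Finset.range (i + 1), tp k • e (n k)|) hi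
        · exact le_partialSups_of_le (fun i => |∑ k ∈ Finset.range (i + 1), tm k • e (n k)|) hi
      have hPSle : partialSups (fun i => |∑ k ∈ Finset.range (i + 1), t k • e (n k)|) m ≤
          lam • PSp + (1 - lam) • PSm := partialSups_le _ _ _ habs_i
      have hn := my_norm_mono (my_partialSups_nonneg _ m) hPSle
      have hnp : ‖lam • PSp + (1 - lam) • PSm‖ ≤ lam * ‖PSp‖ + (1 - lam) * ‖PSm‖ := by
        refine (norm_add_le _ _).trans ?_
        rw [norm_smul, norm_smul, Real.norm_eq_abs, Real.norm_eq_abs,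
          abs_of_nonneg hlam0, abs_of_nonneg (by linarith : (0:ℝ) ≤ 1 - lam)]
      -- induction hypotheses for tp and tm
      have hcard' : ∀ t' : ℕ → ℝ, t' = Function.update t k0 a ∨ t' = Function.update t k0 (-a) →
          ((Finset.range (m + 1)).filter (fun k => t' k ≠ a ∧ t' k ≠ -a)).card ≤ r := by
        intro t' ht'
        have hsub : ((Finset.range (m + 1)).filter (fun k => t' k ≠ a ∧ t' k ≠ -a)) ⊆
            ((Finset.range (m + 1)).filter (fun k => t k ≠ a ∧ t k ≠ -a)).erase k0 := by
          intro k hk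
          obtain ⟨hkr, hkc⟩ := Finset.mem_filter.1 hk
          have hkk0 : k ≠ k0 := by
            intro h
            subst h
            rcases ht' with h' | h' <;> rw [h', Function.update_self] at hkc
            · exact hkc.1 rfl
            · exact hkc.2 rfl
          refine Finset.mem_erase.2 ⟨hkk0, Finset.mem_filter.2 ⟨hkr, ?_⟩⟩
          rcases ht' with h' | h' <;> rw [h', Function.update_of_ne hkk0] at hkc <;> exact hkc
        have h1 := Finset.card_le_card hsub
        have h2 := Finset.card_erase_of_mem hk0
        omega
      have hbox' : ∀ t' : ℕ → ℝ, t' = Function.update t k0 a ∨ t' = Function.update t k0 (-a) →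
          ∀ k ≤ m, |t' k| ≤ a := by
        intro t' ht' k hk
        by_cases hkk0 : k = k0
        · subst hkk0
          rcases ht' with h' | h' <;> rw [h', Function.update_self]
          · rw [abs_of_pos ha]
          · rw [abs_neg, abs_of_pos ha]
        · rcases ht' with h' | h' <;> rw [h', Function.update_of_ne hkk0] <;> exact hbox k hk
      have hIHp : ‖PSp‖ ≤ C0 := IH tp (hcard' tp (Or.inl htp)) (hbox' tp (Or.inl htp))
      have hIHm : ‖PSm‖ ≤ C0 := IH tm (hcard' tm (Or.inr htm)) (hbox' tm (Or.inr htm))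
      have h3 : lam * ‖PSp‖ ≤ lam * C0 := mul_le_mul_of_nonneg_left hIHp hlam0
      have h4 : (1 - lam) * ‖PSm‖ ≤ (1 - lam) * C0 :=
        mul_le_mul_of_nonneg_left hIHm (by linarith)
      calc ‖partialSups (fun i => |∑ k ∈ Finset.range (i + 1), t k • e (n k)|) m‖
          ≤ lam * ‖PSp‖ + (1 - lam) * ‖PSm‖ := le_trans hn hnp
        _ ≤ lam * C0 + (1 - lam) * C0 := by linarith
        _ = C0 := by ring
  -- conclusion
  have hfinal := hconv (m + 1) (fun k => c x (n k))
    (le_trans (Finset.card_filter_le _ _) (by simp)) haA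
  refine hfinal.trans ?_
  have hcq0 : (0:ℝ) ≤ Cqg := by linarith
  have hcu0 : (0:ℝ) ≤ Cu := by linarith
  have hstep : C0 ≤ Cu * (a * (2 * Cqg * (2 / b * (Cqg * ‖x‖)))) := by
    rw [hC0]
    have h2 : 0 ≤ 2 * Cqg := by linarith
    gcongr
  refine hstep.trans ?_
  have heq : Cu * (a * (2 * Cqg * (2 / b * (Cqg * ‖x‖)))) = 4 * (Cqg ^ 2 * Cu * (a / b) * ‖x‖) := by
    ring
  have heq2 : 8 * Cqg ^ 2 * Cu * (a / b) * ‖x‖ = 8 * (Cqg ^ 2 * Cu * (a / b) * ‖x‖) := by ring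
  rw [heq, heq2]
  have hE : 0 ≤ Cqg ^ 2 * Cu * (a / b) * ‖x‖ := by positivity
  linarith
end
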